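/- arXiv:1909.10421 — 5 statements merged into one kernel-verified Lean document; each statement's English description precedes it below -/
import Mathlib

section
/- For any two finite connected simple graphs G and H, the gonality of the Cartesian (box) product satisfies gon(G □ H) ≤ min{gon(G)·|V(H)|, gon(H)·|V(G)|}. -/
open Finset
open scoped Classical

namespace SimpleGraph

variable {V : Type*}

/-- A divisor `D : V → ℤ` is effective if all its values are nonnegative. -/
def Effective (D : V → ℤ) : Prop := ∀ v, 0 ≤ D v

/-- The Laplacian of `G` applied to `x : V → ℤ`:
`(lap G x) v = deg(v)·x(v) − ∑_{u ~ v} x(u) = ∑_{u ~ v} (x v − x u)`. -/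
noncomputable def lap [Fintype V] (G : SimpleGraph V) (x : V → ℤ) : V → ℤ :=
  fun v => ∑ u, if G.Adj v u then x v - x u else 0

/-- Two divisors are (linearly) equivalent if they differ by a Laplacian image. -/
def LinEquiv [Fintype V] (G : SimpleGraph V) (D D' : V → ℤ) : Prop :=
  ∃ x : V → ℤ, D - D' = G.lap x

/-- A divisor has positive rank if for every vertex `v`, subtracting one chip at `v`
yields a divisor equivalent to an effective divisor. -/
def PosRank [Fintype V] (G : SimpleGraph V) (D : V → ℤ) : Prop :=
  ∀ v : V, ∃ E : V → ℤ, Effective E ∧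
    G.LinEquiv (D - fun u => if u = v then (1 : ℤ) else 0) E

/-- The gonality of `G`: the minimum degree of an effective divisor of positive rank. -/
noncomputable def gonality [Fintype V] (G : SimpleGraph V) : ℕ :=
  sInf {n : ℕ | ∃ D : V → ℤ, Effective D ∧ G.PosRank D ∧ (∑ v, D v) = (n : ℤ)}

/-- The genus of `G`: `|E| − |V| + 1`. -/
noncomputable def genus [Fintype V] (G : SimpleGraph V) : ℤ :=
  (Nat.card G.edgeSet : ℤ) - (Fintype.card V : ℤ) + 1

end SimpleGraph

open SimpleGraph

/-!
Pull a positive-rank divisor `D` of `G` back along the projection `G □ H → G`. The Laplacian of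
`G □ H` on a function that is constant on the `H`-fibres is the Laplacian of `G`, so a firing
script in `G` witnessing that `D - v` is equivalent to an effective divisor also works upstairs
for `D ∘ Prod.fst - (v, w)`: the extra chips at the other points `(v, w')` of the fibre keep the
result effective. The pulled-back divisor has degree `deg D · |V(H)|`; symmetrically for `H`.
-/

theorem Finset.card_filter_fst_eq {V W : Type*} [Fintype V] [Fintype W] (v : V) :
    #{p : V × W | p.1 = v} = Fintype.card W := by
  rw [show ({p | p.1 = v} : Finset (V × W)) = {v} ×ˢ univ by
      ext; simp only [mem_filter, mem_product, mem_singleton, mem_univ, true_and, and_true],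
    card_product, card_singleton, one_mul, card_univ]

theorem Finset.card_filter_snd_eq {V W : Type*} [Fintype V] [Fintype W] (w : W) :
    #{p : V × W | p.2 = w} = Fintype.card V := by
  rw [show ({p | p.2 = w} : Finset (V × W)) = univ ×ˢ {w} by
      ext; simp only [mem_filter, mem_product, mem_singleton, mem_univ, true_and],
    card_product, card_singleton, mul_one, card_univ]

namespace SimpleGraph

variable {V V' W : Type*} [Fintype V] [Fintype V'] [Fintype W]

theorem exists_posRank_sum_eq_gonality (G : SimpleGraph V) :
    ∃ D : V → ℤ, Effective D ∧ G.PosRank D ∧ ∑ v, D v = G.gonality := by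
  refine Nat.sInf_mem (s := {n : ℕ | ∃ D, Effective D ∧ G.PosRank D ∧ ∑ v, D v = n})
    ⟨Fintype.card V, fun _ => 1, fun _ => zero_le_one, ?_, by simp⟩
  intro v
  refine ⟨fun u => 1 - if u = v then 1 else 0, fun u => by by_cases h : u = v <;> simp [h], 0, ?_⟩
  funext u
  simp [lap]

theorem gonality_le_of_posRank {G : SimpleGraph V} {D : V → ℤ} {n : ℕ} (hD : Effective D)
    (hDG : G.PosRank D) (hn : ∑ v, D v = n) : G.gonality ≤ n :=
  Nat.sInf_le ⟨D, hD, hDG, hn⟩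

theorem PosRank.comp {G : SimpleGraph V} {G' : SimpleGraph V'} {f : V' → V}
    (hf : ∀ x, G'.lap (x ∘ f) = G.lap x ∘ f) {D : V → ℤ} (hD : G.PosRank D) :
    G'.PosRank (D ∘ f) := by
  intro v'
  obtain ⟨E, hE, x, hx⟩ := hD (f v')
  set F : V' → ℤ := fun u' => (if f u' = f v' then 1 else 0) - if u' = v' then 1 else 0
  have hF : Effective F := fun u' => by
    by_cases h : u' = v'
    · simp [F, h]
    · simp only [F, h, if_false, sub_zero]
      split_ifs <;> norm_num
  refine ⟨E ∘ f + F, fun u' => add_nonneg (hE _) (hF u'), x ∘ f, ?_⟩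
  rw [hf, ← hx]
  funext u'
  simp [F]
  ring

theorem gonality_le_mul_of_lap_comp {G : SimpleGraph V} {G' : SimpleGraph V'} {f : V' → V}
    (hf : ∀ x, G'.lap (x ∘ f) = G.lap x ∘ f) {k : ℕ} (hk : ∀ v, #{v' | f v' = v} = k) :
    G'.gonality ≤ G.gonality * k := by
  obtain ⟨D, hD, hDG, hdeg⟩ := G.exists_posRank_sum_eq_gonality
  refine gonality_le_of_posRank (fun v' => hD (f v')) (hDG.comp hf) ?_
  calc ∑ v', D (f v') = ∑ v, ∑ v' with f v' = v, D v := (Finset.sum_fiberwise' _ _ _).symm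
    _ = ∑ v, k * D v := by simp only [Finset.sum_const, hk, nsmul_eq_mul]
    _ = (G.gonality * k : ℕ) := by rw [← Finset.mul_sum, hdeg]; push_cast; ring

theorem lap_comp_fst_boxProd (G : SimpleGraph V) (H : SimpleGraph W) (x : V → ℤ) :
    (G □ H).lap (x ∘ Prod.fst) = G.lap x ∘ Prod.fst := by
  funext p
  -- an `H`-edge contributes `x p.1 - x p.1 = 0`
  have hterm : ∀ q : V × W, (if (G □ H).Adj p q then x p.1 - x q.1 else 0) =
      if q.2 = p.2 then (if G.Adj p.1 q.1 then x p.1 - x q.1 else 0) else 0 := by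
    rintro ⟨a, b⟩
    by_cases hb : b = p.2 <;> by_cases ha : a = p.1 <;> aesop
  simp only [lap, Function.comp_apply, hterm, Fintype.sum_prod_type, Finset.sum_ite_eq',
    Finset.mem_univ, if_true]

theorem lap_comp_snd_boxProd (G : SimpleGraph V) (H : SimpleGraph W) (x : W → ℤ) :
    (G □ H).lap (x ∘ Prod.snd) = H.lap x ∘ Prod.snd := by
  funext p
  have hterm : ∀ q : V × W, (if (G □ H).Adj p q then x p.2 - x q.2 else 0) =
      if q.1 = p.1 then (if H.Adj p.2 q.2 then x p.2 - x q.2 else 0) else 0 := by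
    rintro ⟨a, b⟩
    by_cases hb : b = p.2 <;> by_cases ha : a = p.1 <;> aesop
  simp only [lap, Function.comp_apply, hterm, Fintype.sum_prod_type_right, Finset.sum_ite_eq',
    Finset.mem_univ, if_true]

end SimpleGraph

theorem gonality_boxProd_le_general {V W : Type*} [Fintype V] [Fintype W]
    (G : SimpleGraph V) (H : SimpleGraph W) :
    (G □ H).gonality ≤ min (G.gonality * Fintype.card W) (H.gonality * Fintype.card V) :=
  le_min (gonality_le_mul_of_lap_comp (lap_comp_fst_boxProd G H) card_filter_fst_eq)
    (gonality_le_mul_of_lap_comp (lap_comp_snd_boxProd G H) card_filter_snd_eq)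

theorem gonality_boxProd_le {V W : Type*} [Fintype V] [Fintype W]
    (G : SimpleGraph V) (H : SimpleGraph W) (hG : G.Connected) (hH : H.Connected) :
    (G □ H).gonality ≤ min (G.gonality * Fintype.card W) (H.gonality * Fintype.card V) :=
  gonality_boxProd_le_general G H
end

section
/- For every n ≥ 2, the gonality of the complete graph K_n on n vertices is n − 1. -/
open Finset
open scoped Classical

open SimpleGraph

lemma lap_top (n : ℕ) (x : Fin n → ℤ) (v : Fin n) :
    (⊤ : SimpleGraph (Fin n)).lap x v = n * x v - ∑ u, x u := by
  calc (⊤ : SimpleGraph (Fin n)).lap x v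
      = ∑ u : Fin n, ((x v - x u) - (if v = u then x v - x u else 0)) := by
        simp only [SimpleGraph.lap]
        exact Finset.sum_congr rfl (fun u _ => by by_cases h : v = u <;> simp [h])
    _ = (∑ u : Fin n, (x v - x u)) - (∑ u : Fin n, if v = u then x v - x u else 0) :=
        Finset.sum_sub_distrib _ _
    _ = n * x v - ∑ u, x u := by
        rw [Finset.sum_ite_eq Finset.univ v (fun u => x v - x u)]
        simp [Finset.sum_sub_distrib, Finset.card_univ, mul_comm]

lemma upper (n : ℕ) (hn : 2 ≤ n) :
    (n - 1) ∈ {m : ℕ | ∃ D : Fin n → ℤ, Effective D ∧ (⊤ : SimpleGraph (Fin n)).PosRank D ∧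
      (∑ v, D v) = (m : ℤ)} := by
  haveI : NeZero n := ⟨by omega⟩
  refine ⟨fun u => if u = 0 then 0 else 1, fun u => by positivity, ?_, ?_⟩
  · intro v
    by_cases hv : v = 0
    · subst hv
      refine ⟨fun u => if u = 0 then (n : ℤ) - 2 else 0, fun u => by
        by_cases h : u = 0 <;> simp [h]; push_cast; omega, ?_⟩
      refine ⟨fun u => if u = 0 then -1 else 0, ?_⟩
      funext u
      have hS : (∑ w : Fin n, (if w = 0 then (-1 : ℤ) else 0)) = -1 := by
        rw [Finset.sum_ite_eq' Finset.univ (0 : Fin n)]; simp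
      simp only [Pi.sub_apply]
      rw [lap_top, hS]
      by_cases h : u = 0 <;> simp [h] <;> ring
    · refine ⟨fun u => (if u = 0 then 0 else 1) - (if u = v then 1 else 0), ?_, ?_⟩
      · intro u
        by_cases h : u = 0
        · subst h; simp [Ne.symm hv]
        · by_cases h2 : u = v <;> simp [h, h2, hv]
      · refine ⟨0, ?_⟩
        funext u
        have : (⊤ : SimpleGraph (Fin n)).lap 0 u = 0 := by rw [lap_top]; simp
        simp only [Pi.sub_apply, this]
        ring
  · have : (∑ v : Fin n, (if v = 0 then (0:ℤ) else 1))
        = ∑ v : Fin n, ((1:ℤ) - if v = 0 then 1 else 0) := by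
      refine Finset.sum_congr rfl fun v _ => by by_cases h : v = 0 <;> simp [h]
    rw [this, Finset.sum_sub_distrib, Finset.sum_ite_eq' Finset.univ (0 : Fin n)]
    simp [Finset.card_univ]
    push_cast [Nat.cast_sub (by omega : 1 ≤ n)]
    ring

lemma lower (n : ℕ) (hn : 2 ≤ n) (m : ℕ) (D : Fin n → ℤ) (hD : Effective D)
    (hPR : (⊤ : SimpleGraph (Fin n)).PosRank D) (hdeg : (∑ v, D v) = (m : ℤ)) :
    n - 1 ≤ m := by
  by_contra hlt
  push_neg at hlt
  have hm : (m : ℤ) ≤ (n : ℤ) - 2 := by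
    have h1 : m + 1 ≤ n - 1 := hlt
    omega
  have hv : ∃ v, D v = 0 := by
    by_contra h
    push_neg at h
    have h1 : ∀ v, (1 : ℤ) ≤ D v := fun v => by have := hD v; have := h v; omega
    have h2 : (n : ℤ) ≤ ∑ v, D v := by
      calc (n : ℤ) = ∑ _v : Fin n, (1 : ℤ) := by simp [Finset.card_univ]
        _ ≤ ∑ v, D v := Finset.sum_le_sum (fun v _ => h1 v)
    omega
  obtain ⟨v, hv0⟩ := hv
  obtain ⟨E, hE, x, heq⟩ := hPR v
  set S : ℤ := ∑ u, x u with hS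
  have hpt : ∀ u, D u - (if u = v then 1 else 0) - E u = n * x u - S := by
    intro u
    have h0 := congrFun heq u
    simp only [Pi.sub_apply] at h0
    rw [lap_top] at h0
    by_cases h : u = v <;> simp [h] at h0 ⊢ <;> linarith [h0]
  set t : Fin n → ℤ := fun u => S - n * x u with ht
  have htval : ∀ u, t u = E u - D u + (if u = v then 1 else 0) := by
    intro u; have := hpt u; simp only [ht]; omega
  have hsum : ∑ u, t u = 0 := by
    simp only [ht]
    rw [Finset.sum_sub_distrib, Finset.sum_const, Finset.card_univ, Fintype.card_fin,
      ← Finset.mul_sum]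
    push_cast
    ring
  have htv : 1 ≤ t v := by
    have h := htval v
    rw [hv0] at h
    simp at h
    have := hE v
    omega
  have htD : ∀ u, -D u ≤ t u := by
    intro u
    have h := htval u
    have h3 := hE u
    by_cases h2 : u = v
    · rw [if_pos h2] at h; omega
    · rw [if_neg h2] at h; omega
  set r : ℤ := (S - 1) % n + 1 with hr
  have hn0 : (0 : ℤ) < n := by exact_mod_cast (by omega : 0 < n)
  have hr1 : 1 ≤ r := by
    have := Int.emod_nonneg (S - 1) (by omega : (n:ℤ) ≠ 0)
    omega
  have hrn : r ≤ n := by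
    have := Int.emod_lt_of_pos (S - 1) hn0
    omega
  have hdvd : ∀ u, (n : ℤ) ∣ t u - r := by
    intro u
    have h1 : (n : ℤ) ∣ (S - 1) - (S - 1) % n := Int.dvd_self_sub_of_emod_eq rfl
    have h2 : t u - r = ((S - 1) - (S - 1) % n) - n * x u := by simp only [ht, hr]; ring
    rw [h2]
    exact dvd_sub h1 (dvd_mul_right _ _)
  set P : Finset (Fin n) := Finset.univ.filter (fun u => 1 ≤ t u) with hPdef
  set N : Finset (Fin n) := Finset.univ.filter (fun u => ¬ 1 ≤ t u) with hNdef
  have hcard : P.card + N.card = n := by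
    rw [hPdef, hNdef, Finset.card_filter_add_card_filter_not]
    simp [Finset.card_univ]
  have htP : ∀ u ∈ P, r ≤ t u := by
    intro u hu
    have h1 : 1 ≤ t u := (Finset.mem_filter.mp hu).2
    obtain ⟨k, hk⟩ := hdvd u
    rcases le_or_gt 0 k with h | h
    · nlinarith
    · have hk1 : k ≤ -1 := by omega
      nlinarith
  have htN : ∀ u ∈ N, t u ≤ r - n := by
    intro u hu
    have h1 : t u ≤ 0 := by have := (Finset.mem_filter.mp hu).2; omega
    obtain ⟨k, hk⟩ := hdvd u
    rcases le_or_gt k (-1) with h | h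
    · nlinarith
    · have hk0 : 0 ≤ k := by omega
      nlinarith
  have hvP : v ∈ P := Finset.mem_filter.mpr ⟨Finset.mem_univ v, htv⟩
  have ha1 : (1 : ℤ) ≤ (P.card : ℤ) := by
    exact_mod_cast Finset.card_pos.mpr ⟨v, hvP⟩
  have hPsum : (P.card : ℤ) * r ≤ ∑ u ∈ P, t u := by
    calc (P.card : ℤ) * r = ∑ _u ∈ P, r := by rw [Finset.sum_const]; push_cast; ring
      _ ≤ ∑ u ∈ P, t u := Finset.sum_le_sum htP
  have hNsum : ∑ u ∈ N, t u ≤ (N.card : ℤ) * (r - n) := by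
    calc ∑ u ∈ N, t u ≤ ∑ _u ∈ N, (r - n) := Finset.sum_le_sum htN
      _ = (N.card : ℤ) * (r - n) := by rw [Finset.sum_const]; push_cast; ring
  have hsplit : ∑ u ∈ P, t u + ∑ u ∈ N, t u = 0 := by
    rw [hPdef, hNdef, Finset.sum_filter_add_sum_filter_not]
    exact hsum
  have hNle : -(∑ u ∈ N, t u) ≤ (m : ℤ) := by
    have h1 : ∑ u ∈ N, (-D u) ≤ ∑ u ∈ N, t u := Finset.sum_le_sum (fun u _ => htD u)
    have h2 : ∑ u ∈ N, D u ≤ ∑ u, D u :=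
      Finset.sum_le_sum_of_subset_of_nonneg (Finset.subset_univ N) (fun u _ _ => hD u)
    have h3 : ∑ u ∈ N, (-D u) = -(∑ u ∈ N, D u) := by rw [Finset.sum_neg_distrib]
    linarith [hdeg ▸ h2]
  have habn : (P.card : ℤ) + (N.card : ℤ) = n := by exact_mod_cast hcard
  have h1 : (P.card : ℤ) * r ≤ (n : ℤ) - 2 := by linarith
  have h2 : (N.card : ℤ) * ((n : ℤ) - r) ≤ (n : ℤ) - 2 := by
    have he : (N.card : ℤ) * ((n:ℤ) - r) = -((N.card : ℤ) * (r - (n:ℤ))) := by ring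
    linarith [hNsum, hNle, he]
  have hb1 : (1 : ℤ) ≤ (N.card : ℤ) := by
    rcases Nat.eq_zero_or_pos N.card with h | h
    · exfalso
      have hN0 : N = ∅ := Finset.card_eq_zero.mp h
      have hz : ∑ u ∈ N, t u = 0 := by rw [hN0]; simp
      have har := mul_le_mul ha1 hr1 zero_le_one (by linarith)
      rw [mul_one] at har
      linarith
    · exact_mod_cast h
  have hs1 : r ≤ (n : ℤ) - 1 := by
    rcases lt_or_eq_of_le hrn with h | h
    · omega
    · exfalso
      have hx : (1:ℤ) * (n:ℤ) ≤ (P.card:ℤ) * (n:ℤ) :=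
        mul_le_mul_of_nonneg_right ha1 (le_of_lt hn0)
      rw [h] at h1
      linarith
  -- final contradiction
  clear_value r P N
  have habk : ((n:ℤ) - 1) ≤ (P.card : ℤ) * (N.card : ℤ) := by
    have hx : (P.card : ℤ) * (N.card : ℤ) - ((n:ℤ) - 1)
        = ((P.card:ℤ) - 1) * ((N.card:ℤ) - 1) := by linear_combination habn
    have hy : (0:ℤ) ≤ ((P.card:ℤ) - 1) * ((N.card:ℤ) - 1) :=
      mul_nonneg (by linarith) (by linarith)
    linarith
  have hrsk : ((n:ℤ) - 1) ≤ r * ((n:ℤ) - r) := by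
    have hx : r * ((n:ℤ) - r) - ((n:ℤ) - 1) = (r - 1) * ((n:ℤ) - r - 1) := by ring
    have hy : (0:ℤ) ≤ (r - 1) * ((n:ℤ) - r - 1) := mul_nonneg (by linarith) (by linarith)
    linarith
  have hbs0 : 0 ≤ (N.card : ℤ) * ((n:ℤ) - r) :=
    mul_nonneg (by linarith) (by linarith)
  have h3 : ((P.card : ℤ) * r) * ((N.card : ℤ) * ((n:ℤ) - r)) ≤ ((n:ℤ) - 2) * ((n:ℤ) - 2) :=
    mul_le_mul h1 h2 hbs0 (by linarith)
  have hab0 : 0 ≤ (P.card : ℤ) * (N.card : ℤ) := mul_nonneg (by linarith) (by linarith)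
  have h4 : ((n:ℤ) - 1) * ((n:ℤ) - 1) ≤ ((P.card : ℤ) * (N.card : ℤ)) * (r * ((n:ℤ) - r)) :=
    mul_le_mul habk hrsk (by linarith) hab0
  have h5 : ((P.card : ℤ) * (N.card : ℤ)) * (r * ((n:ℤ) - r))
      = ((P.card : ℤ) * r) * ((N.card : ℤ) * ((n:ℤ) - r)) := by ring
  rw [h5] at h4
  have h6 : ((n:ℤ) - 1) * ((n:ℤ) - 1) ≤ ((n:ℤ) - 2) * ((n:ℤ) - 2) := le_trans h4 h3
  have hnn : (2 : ℤ) ≤ n := by exact_mod_cast hn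
  have hx : ((n:ℤ) - 2) * ((n:ℤ) - 2) - ((n:ℤ) - 1) * ((n:ℤ) - 1) = 3 - 2 * n := by ring
  linarith


theorem gonality_completeGraph (n : ℕ) (hn : 2 ≤ n) :
    (⊤ : SimpleGraph (Fin n)).gonality = n - 1 := by
  unfold SimpleGraph.gonality
  apply le_antisymm
  · exact Nat.sInf_le (upper n hn)
  · exact le_csInf ⟨n - 1, upper n hn⟩
      (fun m ⟨D, hD, hPR, hdeg⟩ => lower n hn m D hD hPR hdeg)
end

section
/- Let n ≥ 2 and let T be a finite tree (connected acyclic simple graph) with at least two vertices. Then gon(K_n □ T) = n, where K_n is the complete graph on n vertices. -/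
open Finset
open scoped Classical

open SimpleGraph


namespace SimpleGraphGonAux
open SimpleGraph
variable {W : Type*}

lemma lap_add [Fintype V] (G : SimpleGraph V) (x y : V → ℤ) :
    G.lap (x + y) = G.lap x + G.lap y := by
  funext v
  simp only [lap, Pi.add_apply, ← Finset.sum_add_distrib]
  refine Finset.sum_congr rfl fun u _ => ?_
  by_cases h : G.Adj v u <;> simp [h] <;> ring

lemma lap_zero [Fintype V] (G : SimpleGraph V) : G.lap 0 = 0 := by
  funext v; simp [lap]

lemma lap_const [Fintype V] (G : SimpleGraph V) (x : V → ℤ)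
    (hx : ∀ u v, x u = x v) : G.lap x = 0 := by
  funext v; simp only [lap, Pi.zero_apply]
  refine Finset.sum_eq_zero fun u _ => ?_
  by_cases h : G.Adj v u <;> simp [h, hx v u]

/-- Firing function for a single tree edge: lap f = 1_a - 1_b. -/
lemma tree_edge_fire [Fintype W] {T : SimpleGraph W} (hT : T.IsAcyclic)
    {a b : W} (hab : T.Adj a b) :
    ∃ f : W → ℤ, T.lap f =
      fun v => (if v = a then (1:ℤ) else 0) - (if v = b then 1 else 0) := by
  have hbr : T.IsBridge s(a, b) := (isAcyclic_iff_forall_adj_isBridge.mp hT) hab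
  rw [isBridge_iff] at hbr
  set T' := T \ fromEdgeSet {s(a, b)} with hT'
  set A : W → Prop := fun v => T'.Reachable a v with hA
  have haA : A a := Reachable.refl a
  have hbA : ¬ A b := hbr
  -- crossing characterization
  have hcross : ∀ u v : W, T.Adj u v → A u → ¬ A v → u = a ∧ v = b := by
    intro u v huv hu hv
    by_cases he : s(u, v) = s(a, b)
    · rcases Sym2.eq_iff.mp he with ⟨rfl, rfl⟩ | ⟨rfl, rfl⟩
      · exact ⟨rfl, rfl⟩
      · exact absurd haA hv
    · exfalso
      apply hv
      exact hu.trans ⟨Walk.cons (by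
        rw [hT', sdiff_adj]
        exact ⟨huv, by simp [fromEdgeSet_adj, he]⟩) Walk.nil⟩
  refine ⟨fun v => if A v then 1 else 0, ?_⟩
  funext v
  have hval : ∀ u v : W, T.Adj v u →
      ((if A v then (1:ℤ) else 0) - (if A u then 1 else 0) ≠ 0) →
      (v = a ∧ u = b) ∨ (v = b ∧ u = a) := by
    intro u v hadj hne
    by_cases hv : A v <;> by_cases hu : A u <;> simp [hv, hu] at hne
    · exact Or.inl (hcross v u hadj hv hu)
    · exact Or.inr ⟨(hcross u v hadj.symm hu hv).2, (hcross u v hadj.symm hu hv).1⟩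
  have hne : a ≠ b := hab.ne
  simp only [lap]
  rcases eq_or_ne a v with rfl | hva
  · rw [Finset.sum_eq_single b]
    · simp [hab, haA, hbA, hne]
    · intro u _ hub
      by_cases hadj : T.Adj a u
      · by_cases hu : A u
        · simp [hadj, haA, hu]
        · exact absurd (hcross a u hadj haA hu).2 hub
      · simp [hadj]
    · simp
  · rcases eq_or_ne b v with rfl | hvb
    · rw [Finset.sum_eq_single a]
      · simp [hab.symm, haA, hbA, hne.symm]
      · intro u _ hua
        by_cases hadj : T.Adj b u
        · by_cases hu : A u
          · exact absurd (hcross u b hadj.symm hu hbA).1 hua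
          · simp [hadj, hbA, hu]
        · simp [hadj]
      · simp
    · rw [Finset.sum_eq_zero, if_neg (Ne.symm hva), if_neg (Ne.symm hvb), sub_zero]
      intro u _
      by_cases hadj : T.Adj v u
      · by_cases h0 : (if A v then (1:ℤ) else 0) - (if A u then 1 else 0) = 0
        · simpa [hadj] using h0
        · rcases hval u v hadj h0 with ⟨h1, _⟩ | ⟨h1, _⟩ <;> [exact absurd h1.symm hva; exact absurd h1.symm hvb]
      · simp [hadj]

lemma tree_fire [Fintype W] {T : SimpleGraph W} (hT : T.IsAcyclic) :
    ∀ {a b : W}, T.Walk a b →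
    ∃ f : W → ℤ, T.lap f =
      fun v => (if v = a then (1:ℤ) else 0) - (if v = b then 1 else 0) := by
  intro a b wlk
  induction wlk with
  | nil => exact ⟨0, by funext v; simp [lap]⟩
  | @cons a c b h p ih =>
    obtain ⟨f1, hf1⟩ := tree_edge_fire hT h
    obtain ⟨f2, hf2⟩ := ih
    refine ⟨f1 + f2, ?_⟩
    rw [lap_add, hf1, hf2]
    funext v
    simp only [Pi.add_apply]
    ring

/-- lap of a pullback along the second projection in a box product. -/
lemma lap_boxProd_snd {α : Type*} [Fintype α] [Fintype W]
    (G : SimpleGraph α) (T : SimpleGraph W) (f : W → ℤ) (p : α × W) :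
    (G □ T).lap (fun q => f q.2) p = T.lap f p.2 := by
  obtain ⟨i, v⟩ := p
  simp only [lap]
  rw [Fintype.sum_prod_type]
  rw [Finset.sum_comm]
  have : ∀ u : W, ∑ j : α, (if (G □ T).Adj (i, v) (j, u) then f v - f u else 0)
      = if T.Adj v u then f v - f u else 0 := by
    intro u
    rcases eq_or_ne v u with rfl | hvu
    · simp [T.irrefl]
    · have : ∀ j : α, (if (G □ T).Adj (i, v) (j, u) then f v - f u else 0)
          = if j = i then (if T.Adj v u then f v - f u else 0) else 0 := by
        intro j
        rcases eq_or_ne j i with rfl | hji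
        · by_cases ht : T.Adj v u <;> simp [boxProd_adj, ht, hvu]
        · simp [boxProd_adj, hvu, hji, Ne.symm hji]
      rw [Finset.sum_congr rfl fun j _ => this j]
      simp
  rw [Finset.sum_congr rfl fun u _ => this u]

lemma card_le_sum_aux {α : Type*} [Fintype α] (c : α → ℤ) (h0 : ∀ a, 0 ≤ c a)
    (A : Finset α) (h1 : ∀ a ∈ A, 1 ≤ c a) : (A.card : ℤ) ≤ ∑ a, c a := by
  calc (A.card : ℤ) = ∑ _a ∈ A, (1 : ℤ) := by simp
    _ ≤ ∑ a ∈ A, c a := Finset.sum_le_sum h1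
    _ ≤ ∑ a, c a := Finset.sum_le_sum_of_subset_of_nonneg (Finset.subset_univ A)
        (fun a _ _ => h0 a)

lemma exists_adj_boundary {G : SimpleGraph W} {F : W → Prop} :
    ∀ {a b : W}, G.Walk a b → F a → ¬ F b → ∃ p q, F p ∧ ¬ F q ∧ G.Adj p q := by
  intro a b wlk
  induction wlk with
  | nil => intro h1 h2; exact absurd h1 h2
  | @cons a c b h p ih =>
    intro h1 h2
    by_cases hc : F c
    · exact ih hc h2
    · exact ⟨a, c, h1, hc, h⟩

lemma exists_neighbor {G : SimpleGraph W} (hc : G.Connected) (hW : 2 ≤ Nat.card W)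
    (w : W) : ∃ w', G.Adj w w' := by
  have : ∃ u : W, u ≠ w := by
    by_contra h
    push_neg at h
    have : Nat.card W ≤ 1 := by
      have := Nat.card_eq_one_iff_exists.mpr ⟨w, fun u => h u⟩
      omega
    omega
  obtain ⟨u, hu⟩ := this
  obtain ⟨wlk⟩ := hc.preconnected w u
  cases wlk with
  | nil => exact absurd rfl hu
  | cons h p => exact ⟨_, h⟩

lemma mixed_fiber_pairs {n : ℕ} [Fintype W] (T : SimpleGraph W) (S : Finset (Fin n × W)) (w : W)
    (h1 : (univ.filter fun i : Fin n => (i,w) ∈ S).Nonempty)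
    (h2 : (univ.filter fun i : Fin n => (i,w) ∈ S) ≠ univ) :
    ∃ A : Finset ((Fin n × W) × (Fin n × W)),
      n - 1 ≤ A.card ∧
      (∀ p ∈ A, p.1 ∈ S ∧ p.2 ∉ S ∧ ((⊤ : SimpleGraph (Fin n)) □ T).Adj p.1 p.2) ∧
      (∀ p ∈ A, p.1.2 = w ∧ p.2.2 = w) := by
  set Sf : Finset (Fin n) := univ.filter (fun i : Fin n => (i,w) ∈ S) with hSf
  refine ⟨(Sf ×ˢ Sfᶜ).image (fun ij => ((ij.1, w), (ij.2, w))), ?_, ?_, ?_⟩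
  · rw [Finset.card_image_of_injective _ (by
      intro a b hab
      simp only [Prod.mk.injEq] at hab
      exact Prod.ext hab.1.1 hab.2.1), Finset.card_product, Finset.card_compl]
    have hs1 : 1 ≤ Sf.card := Finset.card_pos.mpr h1
    have hs2 : Sf.card < Fintype.card (Fin n) :=
      lt_of_le_of_ne (Finset.card_le_univ Sf) (fun h => h2 (Finset.card_eq_iff_eq_univ Sf |>.mp (by simpa using h)))
    have hle : Sf.card ≤ n := by simpa using Finset.card_le_univ Sf
    simp only [Fintype.card_fin] at *
    obtain ⟨a, ha⟩ : ∃ a, Sf.card = a + 1 := ⟨Sf.card - 1, by omega⟩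
    obtain ⟨b, hb⟩ : ∃ b, n - Sf.card = b + 1 := ⟨n - Sf.card - 1, by omega⟩
    rw [ha] at hb ⊢
    rw [hb]
    have hn1 : n - 1 = a + b + 1 := by omega
    rw [hn1]
    nlinarith
  · intro p hp
    simp only [Finset.mem_image, Finset.mem_product, Finset.mem_compl] at hp
    obtain ⟨⟨i, j⟩, ⟨hi, hj⟩, rfl⟩ := hp
    rw [hSf, Finset.mem_filter] at hi
    have hj' : (j, w) ∉ S := by
      intro hjS
      exact hj (by rw [hSf]; simp [hjS])
    have hij : i ≠ j := by rintro rfl; exact hj (by rw [hSf]; simp [hi.2])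
    exact ⟨hi.2, hj', Or.inl ⟨by simpa using hij, rfl⟩⟩
  · intro p hp
    simp only [Finset.mem_image] at hp
    obtain ⟨⟨i, j⟩, _, rfl⟩ := hp
    exact ⟨rfl, rfl⟩

lemma cut_bound [Fintype W] {T : SimpleGraph W} (hc : T.Connected) (hW : 2 ≤ Fintype.card W)
    {n : ℕ} (hn : 2 ≤ n) (S : Finset (Fin n × W)) (hne : S.Nonempty) (hpr : S ≠ univ) :
    (n : ℤ) ≤ ∑ p : (Fin n × W) × (Fin n × W),
      (if p.1 ∈ S ∧ p.2 ∉ S ∧ ((⊤ : SimpleGraph (Fin n)) □ T).Adj p.1 p.2 then 1 else 0) := by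
  set c : (Fin n × W) × (Fin n × W) → ℤ := fun p =>
    if p.1 ∈ S ∧ p.2 ∉ S ∧ ((⊤ : SimpleGraph (Fin n)) □ T).Adj p.1 p.2 then 1 else 0 with hcdef
  have h0 : ∀ p, 0 ≤ c p := fun p => by rw [hcdef]; positivity
  have hcval : ∀ p, (p.1 ∈ S ∧ p.2 ∉ S ∧ ((⊤ : SimpleGraph (Fin n)) □ T).Adj p.1 p.2) → 1 ≤ c p :=
    fun p hp => by rw [hcdef]; simp only [if_pos hp]; norm_num
  -- suffices to find a good Finset A of crossing pairs with n ≤ card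
  suffices h : ∃ A : Finset ((Fin n × W) × (Fin n × W)),
      n ≤ A.card ∧ (∀ p ∈ A, p.1 ∈ S ∧ p.2 ∉ S ∧ ((⊤ : SimpleGraph (Fin n)) □ T).Adj p.1 p.2) by
    obtain ⟨A, hA1, hA2⟩ := h
    calc (n : ℤ) ≤ (A.card : ℤ) := by exact_mod_cast hA1
      _ ≤ ∑ p, c p := card_le_sum_aux c h0 A (fun p hp => hcval p (hA2 p hp))
  by_cases hmix : ∃ w, (univ.filter fun i : Fin n => (i,w) ∈ S).Nonempty ∧
      (univ.filter fun i : Fin n => (i,w) ∈ S) ≠ univ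
  · obtain ⟨w, hw1, hw2⟩ := hmix
    obtain ⟨A, hA1, hA2, hA3⟩ := mixed_fiber_pairs T S w hw1 hw2
    by_cases hmix2 : ∃ w', w' ≠ w ∧ (univ.filter fun i : Fin n => (i,w') ∈ S).Nonempty ∧
        (univ.filter fun i : Fin n => (i,w') ∈ S) ≠ univ
    · -- two mixed fibers
      obtain ⟨w', hww', hw'1, hw'2⟩ := hmix2
      obtain ⟨A', hA'1, hA'2, hA'3⟩ := mixed_fiber_pairs T S w' hw'1 hw'2
      have hdisj : Disjoint A A' := by
        rw [Finset.disjoint_left]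
        intro p hp hp'
        exact hww' ((hA'3 p hp').1.symm.trans ((hA3 p hp).1))
      refine ⟨A ∪ A', ?_, ?_⟩
      · rw [Finset.card_union_of_disjoint hdisj]; omega
      · intro p hp
        rcases Finset.mem_union.mp hp with h | h
        · exact hA2 p h
        · exact hA'2 p h
    · -- unique mixed fiber; use a tree neighbor of w
      push_neg at hmix2
      obtain ⟨w', hadj⟩ := exists_neighbor hc (by simpa [Nat.card_eq_fintype_card] using hW) w
      have hww' : w' ≠ w := fun h => T.irrefl (h ▸ hadj)
      have hnotmix := hmix2 w' hww'
      by_cases hfull : (univ.filter fun i : Fin n => (i,w') ∈ S) = univ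
      · -- w' fiber full: extra pair ((j,w'),(j,w)) with j ∉ S_w
        obtain ⟨j, hj⟩ : ∃ j, j ∉ (univ.filter fun i : Fin n => (i,w) ∈ S) := by
          by_contra h
          push_neg at h
          exact hw2 (Finset.eq_univ_iff_forall.mpr h)
        have hjS : (j, w) ∉ S := fun h => hj (Finset.mem_filter.mpr ⟨Finset.mem_univ j, h⟩)
        have hj'S : (j, w') ∈ S := by
          have hmem : j ∈ univ.filter (fun i : Fin n => (i, w') ∈ S) := by
            rw [hfull]; exact Finset.mem_univ j
          exact (Finset.mem_filter.mp hmem).2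
        set extra : (Fin n × W) × (Fin n × W) := ((j, w'), (j, w)) with hex
        have hexA : extra ∉ A := fun h => hww' ((hA3 extra h).1)
        refine ⟨A ∪ {extra}, ?_, ?_⟩
        · rw [Finset.card_union_of_disjoint (Finset.disjoint_singleton_right.mpr hexA)]
          simp only [Finset.card_singleton]; omega
        · intro p hp
          rcases Finset.mem_union.mp hp with h | h
          · exact hA2 p h
          · rw [Finset.mem_singleton] at h
            subst h
            exact ⟨hj'S, hjS, Or.inr ⟨hadj.symm, rfl⟩⟩
      · -- w' fiber empty: extra pair ((i,w),(i,w')) with i ∈ S_w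
        have hempty : ∀ i : Fin n, (i, w') ∉ S := by
          intro i hiS
          exact hfull (hnotmix ⟨i, Finset.mem_filter.mpr ⟨Finset.mem_univ i, hiS⟩⟩)
        obtain ⟨i, hi⟩ := hw1
        rw [Finset.mem_filter] at hi
        set extra : (Fin n × W) × (Fin n × W) := ((i, w), (i, w')) with hex
        have hexA : extra ∉ A := fun h => hww' ((hA3 extra h).2)
        refine ⟨A ∪ {extra}, ?_, ?_⟩
        · rw [Finset.card_union_of_disjoint (Finset.disjoint_singleton_right.mpr hexA)]
          simp only [Finset.card_singleton]; omega
        · intro p hp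
          rcases Finset.mem_union.mp hp with h | h
          · exact hA2 p h
          · rw [Finset.mem_singleton] at h
            subst h
            exact ⟨hi.2, hempty i, Or.inr ⟨hadj, rfl⟩⟩
  · -- all fibers full or empty
    push_neg at hmix
    set F : W → Prop := fun w => (univ.filter fun i : Fin n => (i,w) ∈ S) = univ with hF
    obtain ⟨⟨i0, a⟩, ha⟩ := hne
    have hFa : F a := hmix a ⟨i0, Finset.mem_filter.mpr ⟨Finset.mem_univ i0, ha⟩⟩
    obtain ⟨⟨j0, b⟩, hb⟩ : ∃ p : Fin n × W, p ∉ S := by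
      by_contra h
      push_neg at h
      exact hpr (Finset.eq_univ_iff_forall.mpr h)
    have hFb : ¬ F b := by
      intro h
      rw [hF] at h
      have hmem : j0 ∈ univ.filter (fun i : Fin n => (i, b) ∈ S) := by
        rw [h]; exact Finset.mem_univ j0
      exact hb (Finset.mem_filter.mp hmem).2
    obtain ⟨p, q, hp, hq, hpq⟩ :=
      exists_adj_boundary ((hc.preconnected a b).some) hFa hFb
    have hpfull : ∀ i : Fin n, (i, p) ∈ S := by
      intro i
      rw [hF] at hp
      have hmem : i ∈ univ.filter (fun i' : Fin n => (i', p) ∈ S) := by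
        rw [hp]; exact Finset.mem_univ i
      exact (Finset.mem_filter.mp hmem).2
    have hqempty : ∀ i : Fin n, (i, q) ∉ S := by
      intro i hiq
      exact hq (hmix q ⟨i, Finset.mem_filter.mpr ⟨Finset.mem_univ i, hiq⟩⟩)
    refine ⟨Finset.univ.image (fun i : Fin n => (((i, p), (i, q)) : (Fin n × W) × (Fin n × W))), ?_, ?_⟩
    · rw [Finset.card_image_of_injective _ (by
        intro x y hxy
        simpa [Prod.ext_iff] using hxy)]
      simp
    · intro pr hpr'
      simp only [Finset.mem_image] at hpr'
      obtain ⟨i, _, rfl⟩ := hpr'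
      exact ⟨hpfull i, hqempty i, Or.inr ⟨hpq, rfl⟩⟩

lemma lower_bound [Fintype W] {T : SimpleGraph W} (hc : T.Connected) (hW : 2 ≤ Fintype.card W)
    {n : ℕ} (hn : 2 ≤ n) (D : Fin n × W → ℤ) (hD : Effective D)
    (hPR : ((⊤ : SimpleGraph (Fin n)) □ T).PosRank D) :
    (n : ℤ) ≤ ∑ v, D v := by
  have hWpos : 0 < Fintype.card W := by omega
  have hWne : Nonempty W := Fintype.card_pos_iff.mp hWpos
  have hnpos : 0 < n := by omega
  have hVne : Nonempty (Fin n × W) := ⟨(⟨0, hnpos⟩, Classical.arbitrary W)⟩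
  by_contra hlt
  push_neg at hlt
  have hq1 : ∀ q : Fin n × W, 1 ≤ D q := by
    intro q
    obtain ⟨E, hE, x, hx⟩ := hPR q
    by_cases hconst : ∀ u v : Fin n × W, x u = x v
    · have hl0 : ((⊤ : SimpleGraph (Fin n)) □ T).lap x = 0 := lap_const _ x hconst
      rw [hl0] at hx
      have := congrFun hx q
      simp only [Pi.sub_apply, Pi.zero_apply, eq_self_iff_true, if_true] at this
      have hEq := hE q
      linarith
    · exfalso
      push_neg at hconst
      obtain ⟨u0, v0, huv⟩ := hconst
      set M : ℤ := Finset.univ.sup' Finset.univ_nonempty x with hM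
      have hle : ∀ u, x u ≤ M := fun u => Finset.le_sup' x (Finset.mem_univ u)
      set S : Finset (Fin n × W) := Finset.univ.filter (fun v => x v = M) with hS
      have hSne : S.Nonempty := by
        obtain ⟨b, _, hb⟩ := Finset.exists_mem_eq_sup' (Finset.univ_nonempty (α := Fin n × W)) x
        exact ⟨b, Finset.mem_filter.mpr ⟨Finset.mem_univ b, hb.symm⟩⟩
      have hSpr : S ≠ Finset.univ := by
        intro h
        have h1 : x u0 = M := (Finset.mem_filter.mp (by rw [h]; exact Finset.mem_univ u0 : u0 ∈ S)).2
        have h2 : x v0 = M := (Finset.mem_filter.mp (by rw [h]; exact Finset.mem_univ v0 : v0 ∈ S)).2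
        exact huv (h1.trans h2.symm)
      have hcut := cut_bound hc hW hn S hSne hSpr
      -- bound the crossing sum by ∑_{v ∈ S} lap x v
      have hstep : (∑ p : (Fin n × W) × (Fin n × W),
          (if p.1 ∈ S ∧ p.2 ∉ S ∧ ((⊤ : SimpleGraph (Fin n)) □ T).Adj p.1 p.2 then (1:ℤ) else 0))
          ≤ ∑ v ∈ S, ((⊤ : SimpleGraph (Fin n)) □ T).lap x v := by
        rw [Fintype.sum_prod_type]
        have hrhs : ∑ v ∈ S, ((⊤ : SimpleGraph (Fin n)) □ T).lap x v
            = ∑ v : Fin n × W, (if v ∈ S then ((⊤ : SimpleGraph (Fin n)) □ T).lap x v else 0) := by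
          rw [hS, Finset.sum_filter]
          refine Finset.sum_congr rfl fun v _ => ?_
          by_cases h : x v = M
          · simp [hS, h]
          · simp [hS, h]
        rw [hrhs]
        refine Finset.sum_le_sum fun v _ => ?_
        by_cases hvS : v ∈ S
        · simp only [if_pos hvS]
          rw [lap]
          refine Finset.sum_le_sum fun u _ => ?_
          have hxv : x v = M := (Finset.mem_filter.mp hvS).2
          by_cases hadj : ((⊤ : SimpleGraph (Fin n)) □ T).Adj v u
          · by_cases huS : u ∈ S
            · have : ¬ (v ∈ S ∧ u ∉ S ∧ ((⊤ : SimpleGraph (Fin n)) □ T).Adj v u) :=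
                fun h => h.2.1 huS
              rw [if_neg this, if_pos hadj]
              have := hle u
              linarith [hxv]
            · have hxu : x u ≠ M := fun h => huS (Finset.mem_filter.mpr ⟨Finset.mem_univ u, h⟩)
              have hxu' : x u ≤ M - 1 := by
                have := hle u
                omega
              rw [if_pos ⟨hvS, huS, hadj⟩, if_pos hadj]
              linarith [hxv]
          · have : ¬ (v ∈ S ∧ u ∉ S ∧ ((⊤ : SimpleGraph (Fin n)) □ T).Adj v u) :=
              fun h => hadj h.2.2
            rw [if_neg this, if_neg hadj]
        · simp only [if_neg hvS]
          exact le_of_eq (Finset.sum_eq_zero fun u _ =>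
            if_neg (fun h : v ∈ S ∧ u ∉ S ∧ ((⊤ : SimpleGraph (Fin n)) □ T).Adj v u => hvS h.1))
      have hstep2 : ∑ v ∈ S, ((⊤ : SimpleGraph (Fin n)) □ T).lap x v ≤ ∑ v ∈ S, D v := by
        refine Finset.sum_le_sum fun v _ => ?_
        have := congrFun hx v
        simp only [Pi.sub_apply] at this
        rw [← this]
        have hEv := hE v
        by_cases h : v = q
        · rw [if_pos h]
          linarith
        · rw [if_neg h]
          linarith
      have hstep3 : ∑ v ∈ S, D v ≤ ∑ v, D v :=
        Finset.sum_le_sum_of_subset_of_nonneg (Finset.subset_univ S) (fun v _ _ => hD v)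
      linarith
  have h1 : (Fintype.card (Fin n × W) : ℤ) ≤ ∑ v, D v := by
    calc (Fintype.card (Fin n × W) : ℤ) = ∑ _v : Fin n × W, (1 : ℤ) := by simp
      _ ≤ ∑ v, D v := Finset.sum_le_sum fun v _ => hq1 v
  have hcard : Fintype.card (Fin n × W) = n * Fintype.card W := by simp
  rw [hcard] at h1
  push_cast at h1
  have h2 : (2 : ℤ) ≤ (Fintype.card W : ℤ) := by exact_mod_cast hW
  have h3 : (1 : ℤ) ≤ (n : ℤ) := by exact_mod_cast hnpos
  nlinarith [h1, h2, h3, hlt]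

lemma upper_mem [Fintype W] (n : ℕ) (T : SimpleGraph W) (hT : T.IsTree) :
    ∃ D : Fin n × W → ℤ, Effective D ∧ ((⊤ : SimpleGraph (Fin n)) □ T).PosRank D ∧
      (∑ v, D v) = (n : ℤ) := by
  have hWne : Nonempty W := hT.isConnected.nonempty
  obtain ⟨w0⟩ := hWne
  refine ⟨fun p => if p.2 = w0 then 1 else 0, fun p => by positivity, ?_, ?_⟩
  · rintro ⟨j, w⟩
    obtain ⟨f, hf⟩ := tree_fire hT.IsAcyclic (hT.isConnected.preconnected w0 w).some
    refine ⟨fun p => (if p.2 = w then 1 else 0) - (if p = (j, w) then 1 else 0), ?_, ?_⟩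
    · rintro ⟨i, v⟩
      rcases eq_or_ne (⟨i, v⟩ : Fin n × W) (j, w) with h | h
      · rw [Prod.mk.injEq] at h
        simp [h.1, h.2]
      · rcases eq_or_ne v w with h2 | h2
        · subst h2
          have : i ≠ j := fun hij => h (by rw [hij])
          simp [this]
        · simp [h, h2]
    · refine ⟨fun p => f p.2, ?_⟩
      funext p
      have := lap_boxProd_snd (⊤ : SimpleGraph (Fin n)) T f p
      rw [this, hf, Pi.sub_apply, Pi.sub_apply]
      ring
  · rw [Fintype.sum_prod_type]
    simp

end SimpleGraphGonAux

open SimpleGraphGonAux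

theorem gonality_boxProd_complete_tree {W : Type*} [Fintype W]
    (n : ℕ) (hn : 2 ≤ n) (T : SimpleGraph W) (hT : T.IsTree)
    (hW : 2 ≤ Fintype.card W) :
    ((⊤ : SimpleGraph (Fin n)) □ T).gonality = n := by
  have hmem : n ∈ {m : ℕ | ∃ D : Fin n × W → ℤ, Effective D ∧
      ((⊤ : SimpleGraph (Fin n)) □ T).PosRank D ∧ (∑ v, D v) = (m : ℤ)} :=
    upper_mem n T hT
  have hlb : ∀ m ∈ {m : ℕ | ∃ D : Fin n × W → ℤ, Effective D ∧
      ((⊤ : SimpleGraph (Fin n)) □ T).PosRank D ∧ (∑ v, D v) = (m : ℤ)}, n ≤ m := by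
    rintro m ⟨D, hD, hPR, hsum⟩
    have := lower_bound hT.isConnected hW hn D hD hPR
    rw [hsum] at this
    exact_mod_cast this
  exact le_antisymm (Nat.sInf_le hmem) (le_csInf ⟨n, hmem⟩ hlb)
end

section
/- Let G be a finite connected simple graph of genus g = |E(G)| − |V(G)| + 1. Then gon(G) ≤ g + 1. -/
open Finset
open scoped Classical

namespace SimpleGraph

variable {V : Type*}

variable [Fintype V] (G : SimpleGraph V)

lemma lap_eq_sum_nbr (x : V → ℤ) (v : V) :
    G.lap x v = ∑ u ∈ G.neighborFinset v, (x v - x u) := by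
  rw [lap, neighborFinset_eq_filter, sum_filter]

lemma sum_lap (x : V → ℤ) : ∑ v, G.lap x v = 0 := by
  have h1 : ∑ v, G.lap x v = ∑ v, ∑ u, if G.Adj u v then x u - x v else 0 :=
    Finset.sum_comm
  have h2 : ∑ v, ∑ u, (if G.Adj u v then x u - x v else 0)
      = - ∑ v, G.lap x v := by
    rw [← Finset.sum_neg_distrib]
    refine Finset.sum_congr rfl fun v _ => ?_
    rw [lap, ← Finset.sum_neg_distrib]
    refine Finset.sum_congr rfl fun u _ => ?_
    rw [G.adj_comm]
    split <;> ring
  omega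

lemma lap_add (x y : V → ℤ) : G.lap (x + y) = G.lap x + G.lap y := by
  funext v
  simp only [lap, Pi.add_apply, ← Finset.sum_add_distrib]
  refine Finset.sum_congr rfl fun u _ => ?_
  split <;> ring

lemma linEquiv_sum {D D' : V → ℤ} (h : G.LinEquiv D D') : ∑ v, D' v = ∑ v, D v := by
  obtain ⟨x, hx⟩ := h
  have : ∑ v, (D v - D' v) = 0 := by
    rw [show (fun v => D v - D' v) = D - D' from rfl] at *
    calc ∑ v, (D - D') v = ∑ v, G.lap x v := by rw [hx]
    _ = 0 := G.sum_lap x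
  have h2 : ∑ v, (D v - D' v) = ∑ v, D v - ∑ v, D' v := Finset.sum_sub_distrib _ _
  omega

lemma nbr_sum_swap (F : V → V → ℤ) :
    ∑ v, ∑ u ∈ G.neighborFinset v, F v u = ∑ v, ∑ u ∈ G.neighborFinset v, F u v := by
  have key : ∀ (H : V → V → ℤ), ∑ v, ∑ u ∈ G.neighborFinset v, H v u
      = ∑ v, ∑ u, if G.Adj v u then H v u else 0 := by
    intro H
    refine Finset.sum_congr rfl fun v _ => ?_
    rw [neighborFinset_eq_filter, sum_filter]
  rw [key, key, Finset.sum_comm]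
  refine Finset.sum_congr rfl fun v _ => Finset.sum_congr rfl fun u _ => ?_
  rw [G.adj_comm]

lemma lap_indicator_mem (S : Finset V) (v : V) (hv : v ∈ S) :
    G.lap (fun u => if u ∈ S then (1:ℤ) else 0) v = ((G.neighborFinset v) \ S).card := by
  have : G.lap (fun u => if u ∈ S then (1:ℤ) else 0) v
      = ∑ u ∈ G.neighborFinset v, if u ∈ S then 0 else (1:ℤ) := by
    rw [lap, neighborFinset_eq_filter, sum_filter]
    refine Finset.sum_congr rfl fun u _ => ?_
    by_cases h : G.Adj v u <;> by_cases h2 : u ∈ S <;> simp [h, h2, hv]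
  rw [this]
  rw [Finset.sum_ite, Finset.sum_const, Finset.sum_const]
  simp [Finset.sdiff_eq_filter]

lemma lap_indicator_not_mem (S : Finset V) (v : V) (hv : v ∉ S) :
    G.lap (fun u => if u ∈ S then (1:ℤ) else 0) v ≤ 0 := by
  rw [lap]
  refine Finset.sum_nonpos fun u _ => ?_
  by_cases h : G.Adj v u <;> by_cases h2 : u ∈ S <;> simp [h, h2, hv]

lemma pot_fire (w : V → ℤ) (S : Finset V) :
    ∑ v, w v * G.lap (fun u => if u ∈ S then (1:ℤ) else 0) v
      = ∑ v ∈ S, ∑ u ∈ (G.neighborFinset v) \ S, (w v - w u) := by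
  set χ : V → ℤ := fun u => if u ∈ S then (1:ℤ) else 0 with hχ
  have step1 : ∑ v, w v * G.lap χ v
      = ∑ v, ∑ u ∈ G.neighborFinset v, (χ v * (1 - χ u) * w v - χ u * (1 - χ v) * w v) := by
    refine Finset.sum_congr rfl fun v _ => ?_
    rw [lap_eq_sum_nbr, Finset.mul_sum]
    refine Finset.sum_congr rfl fun u _ => ?_
    simp only [hχ]
    by_cases h1 : v ∈ S <;> by_cases h2 : u ∈ S <;> simp [h1, h2]
  have step2 : ∑ v, ∑ u ∈ G.neighborFinset v, (χ u * (1 - χ v) * w v)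
      = ∑ v, ∑ u ∈ G.neighborFinset v, (χ v * (1 - χ u) * w u) :=
    G.nbr_sum_swap (fun v u => χ u * (1 - χ v) * w v)
  have step3 : ∑ v, w v * G.lap χ v
      = ∑ v, ∑ u ∈ G.neighborFinset v, (χ v * (1 - χ u) * (w v - w u)) := by
    rw [step1]
    rw [show (∑ v, ∑ u ∈ G.neighborFinset v, (χ v * (1 - χ u) * w v - χ u * (1 - χ v) * w v))
        = ∑ v, ((∑ u ∈ G.neighborFinset v, χ v * (1 - χ u) * w v)
          - ∑ u ∈ G.neighborFinset v, χ u * (1 - χ v) * w v) from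
      Finset.sum_congr rfl fun v _ => by rw [Finset.sum_sub_distrib]]
    rw [Finset.sum_sub_distrib, step2, ← Finset.sum_sub_distrib]
    refine Finset.sum_congr rfl fun v _ => ?_
    rw [← Finset.sum_sub_distrib]
    refine Finset.sum_congr rfl fun u _ => by ring
  rw [step3]
  have step4 : ∀ v, ∑ u ∈ G.neighborFinset v, (χ v * (1 - χ u) * (w v - w u))
      = if v ∈ S then ∑ u ∈ (G.neighborFinset v) \ S, (w v - w u) else 0 := by
    intro v
    by_cases hv : v ∈ S
    · simp only [hχ, hv, if_true]
      rw [Finset.sdiff_eq_filter, Finset.sum_filter]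
      refine Finset.sum_congr rfl fun u _ => ?_
      by_cases h2 : u ∈ S <;> simp [h2]
    · simp only [hχ, hv, if_false]
      refine Finset.sum_eq_zero fun u _ => by ring
  rw [Finset.sum_congr rfl fun v _ => step4 v, ← Finset.sum_filter]
  congr 1
  simp [Finset.filter_mem_eq_inter]

lemma exists_adj_dist_lt' (hG : G.Connected) (q v : V) (h : v ≠ q) :
    ∃ u, G.Adj v u ∧ G.dist q u + 1 = G.dist q v := by
  obtain ⟨p, hp⟩ := (hG.preconnected v q).exists_walk_length_eq_dist
  cases p with
  | nil => exact absurd rfl h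
  | @cons _ u _ hadj p' =>
    refine ⟨u, hadj, ?_⟩
    have h1 : G.dist q u ≤ p'.reverse.length := dist_le _
    have h2 : p'.reverse.length = p'.length := p'.length_reverse
    have h3 : G.dist q v ≤ G.dist q u + G.dist u v := hG.dist_triangle
    have h4 : G.dist u v ≤ 1 := by
      have := dist_le (SimpleGraph.Walk.cons (hadj.symm) SimpleGraph.Walk.nil)
      simpa using this
    have h5 : G.dist q v = G.dist v q := SimpleGraph.dist_comm
    simp only [SimpleGraph.Walk.length_cons] at hp
    omega

lemma exists_reduced_of_nonneg (hG : G.Connected) (q : V) (D : V → ℤ)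
    (hex : ∃ D' : V → ℤ, G.LinEquiv D D' ∧ ∀ v, v ≠ q → 0 ≤ D' v) :
    ∃ D' : V → ℤ, G.LinEquiv D D' ∧ (∀ v, v ≠ q → 0 ≤ D' v) ∧
      ∀ S : Finset V, S.Nonempty → q ∉ S →
        ∃ v ∈ S, D' v < (((G.neighborFinset v) \ S).card : ℤ) := by
  set d : V → ℕ := fun v => G.dist q v with hd_def
  set md : ℕ := univ.sup d with hmd_def
  set Mn : ℕ := (∑ v, G.degree v) + 2 with hMn_def
  set M : ℤ := (Mn : ℤ) with hM_def
  have hM2 : (2:ℤ) ≤ M := by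
    have h0 : (0:ℤ) ≤ ((∑ v, G.degree v : ℕ) : ℤ) := Int.natCast_nonneg _
    rw [hM_def, hMn_def]; push_cast at h0 ⊢; omega
  have hM1 : (1:ℤ) ≤ M := by omega
  set w : V → ℤ := fun v => M ^ (md - d v) with hw_def
  have hw1 : ∀ v, (1:ℤ) ≤ w v := fun v => one_le_pow₀ hM1
  have hwq : ∀ v, w v ≤ w q := by
    intro v
    have hdq : d q = 0 := by simp [hd_def]
    have h1 : md - d v ≤ md - d q := by omega
    exact pow_le_pow_right₀ hM1 h1
  -- the potential
  set P : (V → ℤ) → ℤ := fun D' => ∑ v, w v * D' v with hP_def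
  -- admissible set
  set Good : (V → ℤ) → Prop := fun D' => G.LinEquiv D D' ∧ ∀ v, v ≠ q → 0 ≤ D' v with hGood
  have hbdd : ∀ D', Good D' → P D' ≤ w q * (∑ v, D v) := by
    intro D' ⟨heq, hpos⟩
    have hsum : ∑ v, D' v = ∑ v, D v := G.linEquiv_sum heq
    have key : P D' - w q * (∑ v, D' v) = ∑ v, (w v - w q) * D' v := by
      rw [hP_def, Finset.mul_sum, ← Finset.sum_sub_distrib]
      exact Finset.sum_congr rfl fun v _ => by ring
    have hle : ∑ v, (w v - w q) * D' v ≤ 0 := by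
      refine Finset.sum_nonpos fun v _ => ?_
      by_cases hv : v = q
      · subst hv; simp
      · exact mul_nonpos_of_nonpos_of_nonneg (by linarith [hwq v]) (hpos v hv)
    rw [hsum] at key
    omega
  obtain ⟨p0, ⟨D0, hD0good, hD0P⟩, hp0max⟩ := Int.exists_greatest_of_bdd
    (P := fun z => ∃ D', Good D' ∧ P D' = z)
    ⟨w q * (∑ v, D v), fun z ⟨D', hD', hz⟩ => hz ▸ hbdd D' hD'⟩
    ⟨P hex.choose, hex.choose, hex.choose_spec, rfl⟩
  refine ⟨D0, hD0good.1, hD0good.2, ?_⟩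
  intro S hS hqS
  by_contra hcon
  push_neg at hcon
  set χ : V → ℤ := fun u => if u ∈ S then (1:ℤ) else 0 with hχ
  set D1 : V → ℤ := D0 - G.lap χ with hD1
  have hGood1 : Good D1 := by
    constructor
    · obtain ⟨x, hx⟩ := hD0good.1
      refine ⟨x + χ, ?_⟩
      rw [lap_add, ← hx]
      funext v
      simp only [hD1, Pi.sub_apply, Pi.add_apply]
      ring
    · intro v hv
      by_cases hvS : v ∈ S
      · have h1 : G.lap χ v = (((G.neighborFinset v) \ S).card : ℤ) :=
          G.lap_indicator_mem S v hvS
        have h2 := hcon v hvS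
        simp only [hD1, Pi.sub_apply]
        omega
      · have h1 : G.lap χ v ≤ 0 := G.lap_indicator_not_mem S v hvS
        have h2 := hD0good.2 v hv
        simp only [hD1, Pi.sub_apply]
        omega
  have hPsplit : P D1 = P D0 - ∑ v, w v * G.lap χ v := by
    simp only [hP_def, hD1, Pi.sub_apply]
    rw [← Finset.sum_sub_distrib]
    exact Finset.sum_congr rfl fun v _ => by ring
  have hStot : ∑ v, w v * G.lap χ v
      = ∑ v ∈ S, ∑ u ∈ (G.neighborFinset v) \ S, (w v - w u) := G.pot_fire w S
  -- show the firing sum is negative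
  obtain ⟨v₀, hv₀S, hv₀min⟩ := Finset.exists_min_image S d hS
  have hv₀q : v₀ ≠ q := fun h => hqS (h ▸ hv₀S)
  set j : ℕ := d v₀ with hj_def
  have hj1 : 1 ≤ j := by
    have := (hG.preconnected q v₀).pos_dist_of_ne (Ne.symm hv₀q)
    exact this
  obtain ⟨u₀, hadj₀, hdu₀⟩ := G.exists_adj_dist_lt' hG q v₀ hv₀q
  have hdu₀' : d u₀ + 1 = j := hdu₀
  have hu₀S : u₀ ∉ S := fun h => by have := hv₀min u₀ h; omega
  have hjmd : j ≤ md := Finset.le_sup (f := d) (mem_univ v₀)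
  set c : ℤ := M ^ (md - j) with hc_def
  have hc1 : (1:ℤ) ≤ c := one_le_pow₀ hM1
  have hu₀mem : u₀ ∈ (G.neighborFinset v₀) \ S := by
    rw [Finset.mem_sdiff, mem_neighborFinset]
    exact ⟨hadj₀, hu₀S⟩
  have hwv₀ : w v₀ = c := rfl
  have hwu₀ : w u₀ = c * M := by
    have h1 : md - d u₀ = (md - j) + 1 := by omega
    simp only [hw_def, h1, pow_succ, hc_def]
  have hterm : ∀ v ∈ S, ∀ u ∈ (G.neighborFinset v) \ S, w v - w u ≤ c - 1 := by
    intro v hvS u _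
    have h1 : w v ≤ c := by
      have hjd : j ≤ d v := hv₀min v hvS
      exact pow_le_pow_right₀ hM1 (by omega)
    have h2 := hw1 u
    omega
  set K : V → ℕ := fun v => ((G.neighborFinset v) \ S).card with hK_def
  have hKdeg : ∀ v, K v ≤ G.degree v := fun v =>
    Finset.card_le_card Finset.sdiff_subset
  have hbound1 : ∀ v ∈ S.erase v₀, ∑ u ∈ (G.neighborFinset v) \ S, (w v - w u)
      ≤ (K v : ℤ) * (c - 1) := by
    intro v hv
    have hvS := Finset.mem_of_mem_erase hv
    calc ∑ u ∈ (G.neighborFinset v) \ S, (w v - w u) ≤ (K v) • (c - 1) :=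
          Finset.sum_le_card_nsmul _ _ _ (fun u hu => hterm v hvS u hu)
      _ = (K v : ℤ) * (c - 1) := nsmul_eq_mul _ _
  have hbound0 : ∑ u ∈ (G.neighborFinset v₀) \ S, (w v₀ - w u)
      ≤ (c - c * M) + ((K v₀ : ℤ) - 1) * (c - 1) := by
    rw [← Finset.add_sum_erase _ _ hu₀mem, hwv₀, hwu₀]
    have h1 : ∑ u ∈ ((G.neighborFinset v₀) \ S).erase u₀, (c - w u)
        ≤ (((G.neighborFinset v₀) \ S).erase u₀).card • (c - 1) := by
      refine Finset.sum_le_card_nsmul _ _ _ fun u hu => ?_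
      have := hterm v₀ hv₀S u (Finset.mem_of_mem_erase hu)
      rw [hwv₀] at this
      omega
    have h2 : (((G.neighborFinset v₀) \ S).erase u₀).card = K v₀ - 1 := by
      rw [Finset.card_erase_of_mem hu₀mem]
    have hK1 : 1 ≤ K v₀ := Finset.card_pos.mpr ⟨u₀, hu₀mem⟩ 
    rw [h2] at h1
    have h3 : ((K v₀ - 1 : ℕ) : ℤ) = (K v₀ : ℤ) - 1 := by omega
    rw [nsmul_eq_mul, h3] at h1
    omega
  have hTsum : ∑ v ∈ S, ∑ u ∈ (G.neighborFinset v) \ S, (w v - w u)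
      ≤ (c - c * M) + ((∑ v ∈ S, (K v : ℤ)) - 1) * (c - 1) := by
    rw [← Finset.add_sum_erase _ _ hv₀S, ← Finset.add_sum_erase _ (fun v => (K v : ℤ)) hv₀S]
    have h4 : ∑ v ∈ S.erase v₀, ∑ u ∈ (G.neighborFinset v) \ S, (w v - w u)
        ≤ ∑ v ∈ S.erase v₀, (K v : ℤ) * (c - 1) := Finset.sum_le_sum hbound1
    rw [← Finset.sum_mul] at h4
    nlinarith [hbound0, h4]
  have hKtot : ∑ v ∈ S, (K v : ℤ) ≤ M - 2 := by
    have h1 : ∑ v ∈ S, K v ≤ ∑ v ∈ S, G.degree v := Finset.sum_le_sum fun v _ => hKdeg v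
    have h2 : ∑ v ∈ S, G.degree v ≤ ∑ v, G.degree v :=
      Finset.sum_le_sum_of_subset (Finset.subset_univ S)
    have h3 : (M : ℤ) = ((∑ v, G.degree v : ℕ) : ℤ) + 2 := by
      rw [hM_def, hMn_def]; push_cast; ring
    have h4 : ((∑ v ∈ S, K v : ℕ) : ℤ) = ∑ v ∈ S, (K v : ℤ) := by push_cast; rfl
    have h5 : (∑ v ∈ S, K v : ℕ) ≤ (∑ v, G.degree v : ℕ) := le_trans h1 h2
    omega
  have hneg : ∑ v ∈ S, ∑ u ∈ (G.neighborFinset v) \ S, (w v - w u) < 0 := by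
    nlinarith [hTsum, hKtot, hc1, hM2, mul_nonneg (sub_nonneg.mpr hc1) (sub_nonneg.mpr hKtot)]
  have hP1 : P D0 < P D1 := by omega
  have := hp0max (P D1) ⟨D1, hGood1, rfl⟩
  omega

lemma exists_out_edge (hG : G.Connected) (q : V) (S : Finset V) (hq : q ∉ S)
    (hS : S.Nonempty) : ∃ v ∈ S, ∃ u, G.Adj v u ∧ u ∉ S := by
  by_contra h
  push_neg at h
  obtain ⟨v, hv⟩ := hS
  have key : ∀ (a b : V) (p : G.Walk a b), a ∈ S → b ∈ S := by
    intro a b p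
    induction p with
    | nil => exact id
    | cons hadj p ih => exact fun ha => ih (h _ ha _ hadj)
  exact hq (key v q ((hG.preconnected v q).some) hv)

lemma edge_count_step (S : Finset V) (v : V) (hv : v ∈ S) :
    ((G.neighborFinset v) \ S).card
      + (G.edgeFinset.filter (fun e => ∃ x ∈ S.erase v, x ∈ e)).card
      ≤ (G.edgeFinset.filter (fun e => ∃ x ∈ S, x ∈ e)).card := by
  set F : Finset (Sym2 V) := ((G.neighborFinset v) \ S).image (fun u => s(v, u)) with hF
  have hcardF : F.card = ((G.neighborFinset v) \ S).card := by
    rw [hF]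
    exact Finset.card_image_of_injective _ (fun u1 u2 h => Sym2.congr_right.mp h)
  have hFsub : F ⊆ G.edgeFinset.filter (fun e => ∃ x ∈ S, x ∈ e) := by
    intro e he
    rw [hF, Finset.mem_image] at he
    obtain ⟨u, hu, rfl⟩ := he
    rw [Finset.mem_sdiff, mem_neighborFinset] at hu
    refine Finset.mem_filter.mpr ⟨mem_edgeFinset.mpr hu.1, v, hv, ?_⟩
    exact Sym2.mem_mk_left v u
  have hEsub : G.edgeFinset.filter (fun e => ∃ x ∈ S.erase v, x ∈ e)
      ⊆ G.edgeFinset.filter (fun e => ∃ x ∈ S, x ∈ e) := by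
    intro e he
    rw [Finset.mem_filter] at he ⊢
    obtain ⟨h1, x, hx, hxe⟩ := he
    exact ⟨h1, x, Finset.mem_of_mem_erase hx, hxe⟩
  have hdisj : Disjoint F (G.edgeFinset.filter (fun e => ∃ x ∈ S.erase v, x ∈ e)) := by
    rw [Finset.disjoint_left]
    intro e heF heE
    rw [hF, Finset.mem_image] at heF
    obtain ⟨u, hu, rfl⟩ := heF
    rw [Finset.mem_sdiff] at hu
    obtain ⟨h1, x, hx, hxe⟩ := Finset.mem_filter.mp heE
    rw [Sym2.mem_iff] at hxe
    rcases hxe with rfl | rfl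
    · exact (Finset.notMem_erase x S) hx
    · exact hu.2 (Finset.mem_of_mem_erase hx)
  calc ((G.neighborFinset v) \ S).card
        + (G.edgeFinset.filter (fun e => ∃ x ∈ S.erase v, x ∈ e)).card
      = (F ∪ G.edgeFinset.filter (fun e => ∃ x ∈ S.erase v, x ∈ e)).card := by
        rw [Finset.card_union_of_disjoint hdisj, hcardF]
    _ ≤ _ := Finset.card_le_card (Finset.union_subset hFsub hEsub)

lemma reduced_sum_bound (D : V → ℤ) (S : Finset V)
    (hred : ∀ T ⊆ S, T.Nonempty → ∃ v ∈ T, D v < ((G.neighborFinset v \ T).card : ℤ)) :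
    ∑ v ∈ S, D v + S.card
      ≤ ((G.edgeFinset.filter (fun e => ∃ x ∈ S, x ∈ e)).card : ℤ) := by
  induction S using Finset.strongInduction with
  | _ S ih =>
    rcases S.eq_empty_or_nonempty with rfl | hne
    · simp
    · obtain ⟨v, hv, hDv⟩ := hred S subset_rfl hne
      have hIH := ih (S.erase v) (Finset.erase_ssubset hv)
        (fun T hT hTne => hred T (hT.trans (Finset.erase_subset v S)) hTne)
      have hcount := G.edge_count_step S v hv
      have hsum : ∑ u ∈ S, D u = D v + ∑ u ∈ S.erase v, D u :=
        (Finset.add_sum_erase S D hv).symm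
      have hcard : S.card = (S.erase v).card + 1 := by
        rw [Finset.card_erase_of_mem hv]
        have := Finset.card_pos.mpr ⟨v, hv⟩
        omega
      rw [hsum, hcard]
      push_cast
      push_cast at hIH hcount
      linarith

lemma exists_equiv_nonneg_off (hG : G.Connected) (q : V) (D : V → ℤ) :
    ∃ D' : V → ℤ, G.LinEquiv D D' ∧ ∀ v, v ≠ q → 0 ≤ D' v := by
  set d : V → ℕ := fun v => G.dist q v with hd_def
  set md : ℕ := univ.sup d with hmd_def
  set s : ℤ := ∑ v, |D v| with hs_def
  have hs0 : 0 ≤ s := Finset.sum_nonneg fun v _ => abs_nonneg _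
  set n : ℤ := (Fintype.card V : ℤ) with hn_def
  have hn0 : 0 ≤ n := Int.natCast_nonneg _
  set A : ℤ := n + 1 + s with hA_def
  have hA1 : (1:ℤ) ≤ A := by omega
  set x : V → ℤ := fun v => A ^ (md + 1 - d v) with hx_def
  have key : ∀ v, v ≠ q → G.lap x v ≤ D v := by
    intro v hv
    obtain ⟨u₀, hadj, hdu⟩ := G.exists_adj_dist_lt' hG q v hv
    have hdv1 : 1 ≤ d v := by
      have : d u₀ + 1 = d v := hdu
      omega
    have hdvm : d v ≤ md := Finset.le_sup (mem_univ v)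
    set e : ℕ := md + 1 - d v with he_def
    have he1 : 1 ≤ e := by omega
    have hxv : x v = A ^ e := rfl
    have hxu0 : x u₀ = A ^ (e + 1) := by
      have h1 : d u₀ + 1 = d v := hdu
      have : md + 1 - d u₀ = e + 1 := by omega
      simp only [hx_def, this]
    have hu0mem : u₀ ∈ G.neighborFinset v := G.mem_neighborFinset v u₀ |>.mpr hadj
    have hpow1 : ∀ k : ℕ, (1:ℤ) ≤ A ^ k := fun k => one_le_pow₀ hA1
    have hsplit : G.lap x v
        = (x v - x u₀) + ∑ u ∈ (G.neighborFinset v).erase u₀, (x v - x u) := by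
      rw [lap_eq_sum_nbr, ← Finset.add_sum_erase _ _ hu0mem]
    have hbound : ∑ u ∈ (G.neighborFinset v).erase u₀, (x v - x u)
        ≤ ((G.neighborFinset v).erase u₀).card • (A ^ e) := by
      refine Finset.sum_le_card_nsmul _ _ _ fun u _ => ?_
      have := hpow1 (md + 1 - d u)
      have hxu : (1:ℤ) ≤ x u := this
      rw [hxv] at *
      omega
    have hcard : (((G.neighborFinset v).erase u₀).card : ℤ) ≤ n := by
      rw [hn_def]
      exact_mod_cast (Finset.card_le_univ _).trans (le_of_eq Finset.card_univ)
    have hAe1 : (1:ℤ) ≤ A ^ e := hpow1 e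
    have hAe0 : (0:ℤ) ≤ A ^ e := by linarith
    have hT : ∑ u ∈ (G.neighborFinset v).erase u₀, (x v - x u)
        ≤ (((G.neighborFinset v).erase u₀).card : ℤ) * A ^ e := by
      rw [← nsmul_eq_mul]; exact hbound
    have hT2 : (((G.neighborFinset v).erase u₀).card : ℤ) * A ^ e ≤ n * A ^ e :=
      mul_le_mul_of_nonneg_right hcard hAe0
    rw [hxv, hxu0, pow_succ] at hsplit
    have h6 : s ≤ A ^ e * s := le_mul_of_one_le_left hs0 hAe1
    have h8 : A ^ e - A ^ e * A + n * A ^ e = -(A ^ e * s) := by rw [hA_def]; ring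
    have hDv : |D v| ≤ s := Finset.single_le_sum (fun i _ => abs_nonneg (D i)) (mem_univ v)
    have h9 : -|D v| ≤ D v := neg_abs_le _
    linarith
  refine ⟨D - G.lap x, ⟨x, by funext v; simp⟩, fun v hv => ?_⟩
  have := key v hv
  simp only [Pi.sub_apply]
  omega


lemma card_edge_nat : (Nat.card G.edgeSet : ℤ) = (G.edgeFinset.card : ℤ) := by
  have h : Nat.card G.edgeSet = G.edgeFinset.card := by
    rw [Nat.card_eq_fintype_card, ← G.edgeFinset_card]
  exact_mod_cast h

lemma exists_effective_equiv (hG : G.Connected) (D : V → ℤ)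
    (hdeg : G.genus ≤ ∑ v, D v) : ∃ D', Effective D' ∧ G.LinEquiv D D' := by
  obtain ⟨q⟩ := hG.nonempty
  obtain ⟨D', hequiv, hnonneg, hreduced⟩ :=
    G.exists_reduced_of_nonneg hG q D (G.exists_equiv_nonneg_off hG q D)
  set S : Finset V := univ.erase q with hS_def
  have hqS : q ∉ S := Finset.notMem_erase q univ
  have hred : ∀ T ⊆ S, T.Nonempty → ∃ v ∈ T, D' v < ((G.neighborFinset v \ T).card : ℤ) := by
    intro T hT hTne
    exact hreduced T hTne (fun h => hqS (hT h))
  have hbound := G.reduced_sum_bound D' S hred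
  have hfil : (G.edgeFinset.filter (fun e => ∃ x ∈ S, x ∈ e)).card ≤ G.edgeFinset.card :=
    Finset.card_le_card (Finset.filter_subset _ _)
  have hcardV : 1 ≤ Fintype.card V := Fintype.card_pos_iff.mpr ⟨q⟩
  have hScard : S.card = Fintype.card V - 1 := by
    rw [hS_def, Finset.card_erase_of_mem (mem_univ q), Finset.card_univ]
  have hsplit : ∑ v, D' v = D' q + ∑ v ∈ S, D' v :=
    (Finset.add_sum_erase univ D' (mem_univ q)).symm
  have hsum : ∑ v, D' v = ∑ v, D v := G.linEquiv_sum hequiv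
  have hgenus : G.genus = (G.edgeFinset.card : ℤ) - (Fintype.card V : ℤ) + 1 := by
    rw [genus, G.card_edge_nat]
  have hq0 : 0 ≤ D' q := by
    have h1 : ((S.card : ℤ)) = (Fintype.card V : ℤ) - 1 := by
      rw [hScard]; omega
    have h2 : ((G.edgeFinset.filter (fun e => ∃ x ∈ S, x ∈ e)).card : ℤ)
        ≤ (G.edgeFinset.card : ℤ) := by exact_mod_cast hfil
    linarith
  refine ⟨D', fun v => ?_, hequiv⟩
  by_cases hv : v = q
  · exact hv ▸ hq0
  · exact hnonneg v hv

lemma genus_nonneg (hG : G.Connected) : 0 ≤ G.genus := by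
  obtain ⟨q⟩ := hG.nonempty
  set S : Finset V := univ.erase q with hS_def
  have hqS : q ∉ S := Finset.notMem_erase q univ
  have hred : ∀ T ⊆ S, T.Nonempty →
      ∃ v ∈ T, (0:ℤ) < ((G.neighborFinset v \ T).card : ℤ) := by
    intro T hT hTne
    obtain ⟨v, hv, u, hadj, huT⟩ :=
      G.exists_out_edge hG q T (fun h => hqS (hT h)) hTne
    refine ⟨v, hv, ?_⟩
    have : u ∈ G.neighborFinset v \ T := by
      rw [Finset.mem_sdiff, mem_neighborFinset]; exact ⟨hadj, huT⟩
    have := Finset.card_pos.mpr ⟨u, this⟩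
    exact_mod_cast this
  have hbound := G.reduced_sum_bound (fun _ => (0:ℤ)) S hred
  have hfil : (G.edgeFinset.filter (fun e => ∃ x ∈ S, x ∈ e)).card ≤ G.edgeFinset.card :=
    Finset.card_le_card (Finset.filter_subset _ _)
  have hcardV : 1 ≤ Fintype.card V := Fintype.card_pos_iff.mpr ⟨q⟩
  have hScard : S.card = Fintype.card V - 1 := by
    rw [hS_def, Finset.card_erase_of_mem (mem_univ q), Finset.card_univ]
  have hgenus : G.genus = (G.edgeFinset.card : ℤ) - (Fintype.card V : ℤ) + 1 := by
    rw [genus, G.card_edge_nat]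
  have h2 : ((G.edgeFinset.filter (fun e => ∃ x ∈ S, x ∈ e)).card : ℤ)
      ≤ (G.edgeFinset.card : ℤ) := by exact_mod_cast hfil
  simp only [Finset.sum_const_zero, zero_add] at hbound
  have h1 : ((S.card : ℤ)) = (Fintype.card V : ℤ) - 1 := by rw [hScard]; omega
  linarith

end SimpleGraph

open SimpleGraph

theorem gonality_le_genus_add_one {V : Type*} [Fintype V]
    (G : SimpleGraph V) (hG : G.Connected) :
    (G.gonality : ℤ) ≤ G.genus + 1 := by
  obtain ⟨q⟩ := hG.nonempty
  have hg : 0 ≤ G.genus := G.genus_nonneg hG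
  set D : V → ℤ := fun v => if v = q then G.genus + 1 else 0 with hD_def
  have hEff : Effective D := by
    intro v
    simp only [hD_def]
    split <;> omega
  have hsumD : ∑ v, D v = G.genus + 1 := by
    simp only [hD_def]
    rw [Finset.sum_ite_eq' univ q (fun _ => G.genus + 1)]
    simp
  have hPos : G.PosRank D := by
    intro v
    have hdeg : G.genus ≤ ∑ u, (D - fun u => if u = v then (1:ℤ) else 0) u := by
      have h1 : ∑ u, (D - fun u => if u = v then (1:ℤ) else 0) u
          = ∑ u, D u - ∑ u, (if u = v then (1:ℤ) else 0) := by
        simp only [Pi.sub_apply]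
        exact Finset.sum_sub_distrib _ _
      have h2 : ∑ u, (if u = v then (1:ℤ) else 0) = 1 := by
        rw [Finset.sum_ite_eq' univ v (fun _ => (1:ℤ))]
        simp
      rw [h1, h2, hsumD]
      omega
    obtain ⟨E, hE, hequiv⟩ := G.exists_effective_equiv hG _ hdeg
    exact ⟨E, hE, hequiv⟩
  set N : ℕ := (G.genus + 1).toNat with hN_def
  have hN : (N : ℤ) = G.genus + 1 := Int.toNat_of_nonneg (by omega)
  have hmem : N ∈ {n : ℕ | ∃ D : V → ℤ, Effective D ∧ G.PosRank D ∧ (∑ v, D v) = (n : ℤ)} :=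
    ⟨D, hEff, hPos, by rw [hsumD, hN]⟩
  have hle : G.gonality ≤ N := Nat.sInf_le hmem
  calc (G.gonality : ℤ) ≤ (N : ℤ) := by exact_mod_cast hle
    _ = G.genus + 1 := hN
end

section
/- Let G and H be finite connected simple graphs, each with at least four vertices. Then gon(G □ H) ≤ ⌊(g(G □ H) + 3)/2⌋ − 2; in particular the gonality of G □ H is strictly less than ⌊(g(G □ H) + 3)/2⌋. -/
open Finset
open scoped Classical

open SimpleGraph
namespace GonAux

variable {V : Type*} [Fintype V]

lemma lap_add (G : SimpleGraph V) (x y : V → ℤ) (v : V) :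
    G.lap (x + y) v = G.lap x v + G.lap y v := by
  unfold SimpleGraph.lap
  rw [← Finset.sum_add_distrib]
  refine Finset.sum_congr rfl fun u _ => ?_
  by_cases h : G.Adj v u <;> simp [h] <;> ring

lemma lap_sub_const (G : SimpleGraph V) (x : V → ℤ) (c : ℤ) (v : V) :
    G.lap (fun u => x u - c) v = G.lap x v := by
  unfold SimpleGraph.lap
  refine Finset.sum_congr rfl fun u _ => ?_
  by_cases h : G.Adj v u <;> simp [h]

lemma sum_lap (G : SimpleGraph V) (x : V → ℤ) : ∑ v, G.lap x v = 0 := by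
  unfold SimpleGraph.lap
  have h : ∀ v u : V, (if G.Adj v u then x v - x u else 0)
      = (if G.Adj v u then x v else 0) - (if G.Adj v u then x u else 0) := by
    intro v u; split_ifs <;> simp
  simp_rw [h, Finset.sum_sub_distrib]
  rw [sub_eq_zero, Finset.sum_comm]
  refine Finset.sum_congr rfl fun u _ => Finset.sum_congr rfl fun v _ => ?_
  rw [G.adj_comm]

/-- indicator of a finset -/
noncomputable def ind (A : Finset V) : V → ℤ := fun u => if u ∈ A then 1 else 0

lemma lap_ind_mem (G : SimpleGraph V) {A : Finset V} {v : V} (hv : v ∈ A) :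
    G.lap (ind A) v = ((Finset.univ.filter fun u => G.Adj v u ∧ u ∉ A).card : ℤ) := by
  unfold SimpleGraph.lap
  rw [Finset.card_filter]
  push_cast
  refine Finset.sum_congr rfl fun u _ => ?_
  by_cases h : G.Adj v u <;> by_cases h2 : u ∈ A <;> simp [ind, h, h2, hv]

lemma lap_ind_not_mem (G : SimpleGraph V) {A : Finset V} {v : V} (hv : v ∉ A) :
    G.lap (ind A) v ≤ 0 := by
  unfold SimpleGraph.lap
  refine Finset.sum_nonpos fun u _ => ?_
  by_cases h : G.Adj v u <;> by_cases h2 : u ∈ A <;> simp [ind, h, h2, hv]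

end GonAux
namespace GonAux

variable {V : Type*} [Fintype V]

lemma dist_lt_card (G : SimpleGraph V) (hG : G.Connected) (q v : V) :
    G.dist q v < Fintype.card V := by
  obtain ⟨p, hp⟩ := hG.exists_walk_length_eq_dist q v
  calc G.dist q v ≤ p.bypass.length := SimpleGraph.dist_le _
    _ < Fintype.card V := p.bypass_isPath.length_lt

lemma exists_adj_dist (G : SimpleGraph V) (hG : G.Connected) {q v : V} (hv : v ≠ q) :
    ∃ u, G.Adj v u ∧ G.dist q u + 1 = G.dist q v := by
  obtain ⟨p, hp⟩ := hG.exists_walk_length_eq_dist q v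
  have hpos : 0 < G.dist q v := hG.pos_dist_of_ne (Ne.symm hv)
  cases hrev : p.reverse with
  | nil => exact absurd rfl hv
  | cons h tail =>
    rename_i u
    refine ⟨u, h, ?_⟩
    have hlen : tail.length + 1 = G.dist q v := by
      have := congrArg SimpleGraph.Walk.length hrev
      rw [SimpleGraph.Walk.length_reverse, hp] at this
      simpa using this.symm
    have h1 : G.dist q u ≤ tail.length := by
      have := SimpleGraph.dist_le tail.reverse
      simpa [SimpleGraph.Walk.length_reverse] using this
    have h2 : G.dist q v ≤ G.dist q u + 1 := by
      calc G.dist q v ≤ G.dist q u + G.dist u v := hG.dist_triangle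
        _ ≤ G.dist q u + 1 := by
            have : G.dist u v ≤ 1 := by
              have := SimpleGraph.dist_le (SimpleGraph.Walk.cons h.symm SimpleGraph.Walk.nil)
              simpa using this
            omega
    omega
  
end GonAux
namespace GonAux

variable {V : Type*} [Fintype V]

lemma exists_valid (G : SimpleGraph V) (hG : G.Connected) (q : V) (D : V → ℤ) :
    ∃ x : V → ℤ, ∀ v, v ≠ q → G.lap x v ≤ D v := by
  classical
  set n := Fintype.card V with hn
  set K : ℤ := 1 + ∑ v, |D v| with hK
  have habs : ∀ v : V, |D v| ≤ ∑ u, |D u| := by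
    intro v
    exact Finset.single_le_sum (fun u _ => abs_nonneg (D u)) (Finset.mem_univ v)
  have hK1 : 1 ≤ K := by
    have : (0:ℤ) ≤ ∑ u, |D u| := Finset.sum_nonneg fun u _ => abs_nonneg _
    omega
  have hKD : ∀ v, -K ≤ D v := by
    intro v
    have h1 := habs v
    have h2 : -|D v| ≤ D v := neg_abs_le _
    omega
  refine ⟨fun v => K * ((n:ℤ)+1)^(n - G.dist q v), fun v hv => ?_⟩
  obtain ⟨u0, hadj, hdu⟩ := exists_adj_dist G hG hv
  set k := G.dist q v with hkdef
  have hk1 : 1 ≤ k := hG.pos_dist_of_ne (Ne.symm hv)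
  have hkn : k < n := dist_lt_card G hG q v
  set B : ℤ := K * ((n:ℤ)+1)^(n - k) with hB
  have hnpos : (0:ℤ) < (n:ℤ)+1 := by positivity
  have hBpos : 0 < B := by positivity
  have hBK : K ≤ B := by
    have h1 : (1:ℤ) ≤ ((n:ℤ)+1)^(n - k) := by have := pow_pos hnpos (n - k); omega
    calc K = K * 1 := by ring
      _ ≤ B := by rw [hB]; exact mul_le_mul_of_nonneg_left h1 (by omega)
  have hxnonneg : ∀ u : V, 0 ≤ K * ((n:ℤ)+1)^(n - G.dist q u) := by
    intro u; positivity
  have hterm : ∀ u : V,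
      (if G.Adj v u then K * ((n:ℤ)+1)^(n - k) - K * ((n:ℤ)+1)^(n - G.dist q u) else 0) ≤ B := by
    intro u
    split_ifs with h
    · have := hxnonneg u; omega
    · omega
  have hu0 : (if G.Adj v u0 then K * ((n:ℤ)+1)^(n - k) - K * ((n:ℤ)+1)^(n - G.dist q u0) else 0)
      = B - B * ((n:ℤ)+1) := by
    rw [if_pos hadj]
    have he : n - G.dist q u0 = (n - k) + 1 := by omega
    rw [he, pow_succ]
    ring
  have hsplit : G.lap (fun v => K * ((n:ℤ)+1)^(n - G.dist q v)) v
      = (if G.Adj v u0 then K * ((n:ℤ)+1)^(n - k) - K * ((n:ℤ)+1)^(n - G.dist q u0) else 0)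
        + ∑ u ∈ Finset.univ.erase u0,
          (if G.Adj v u then K * ((n:ℤ)+1)^(n - k) - K * ((n:ℤ)+1)^(n - G.dist q u) else 0) := by
    unfold SimpleGraph.lap
    exact (Finset.add_sum_erase _ _ (Finset.mem_univ u0)).symm
  have hrest : ∑ u ∈ Finset.univ.erase u0,
      (if G.Adj v u then K * ((n:ℤ)+1)^(n - k) - K * ((n:ℤ)+1)^(n - G.dist q u) else 0)
      ≤ ((n:ℤ) - 1) * B := by
    calc ∑ u ∈ Finset.univ.erase u0,
        (if G.Adj v u then K * ((n:ℤ)+1)^(n - k) - K * ((n:ℤ)+1)^(n - G.dist q u) else 0)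
        ≤ (Finset.univ.erase u0).card • B :=
          Finset.sum_le_card_nsmul _ _ B (fun u _ => hterm u)
      _ = ((n:ℤ) - 1) * B := by
          rw [Finset.card_erase_of_mem (Finset.mem_univ u0), Finset.card_univ]
          have hn1 : 1 ≤ n := by omega
          rw [show Fintype.card V - 1 = n - 1 by omega]
          rw [nsmul_eq_mul]
          push_cast [Nat.cast_sub hn1]
          ring
  have : G.lap (fun v => K * ((n:ℤ)+1)^(n - G.dist q v)) v ≤ -B := by
    rw [hsplit, hu0]
    have : B - B*((n:ℤ)+1) + ((n:ℤ)-1)*B = -B := by ring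
    omega
  have := hKD v
  omega

end GonAux
namespace GonAux

variable {V : Type*} [Fintype V]

lemma sum_pairs_zero (G : SimpleGraph V) (x : V → ℤ) (A : Finset V) :
    ∑ w ∈ A, ∑ u ∈ A, (if G.Adj w u then x w - x u else 0) = 0 := by
  have h : ∀ w u : V, (if G.Adj w u then x w - x u else 0)
      = (if G.Adj w u then x w else 0) - (if G.Adj w u then x u else 0) := by
    intro w u; split_ifs <;> simp
  simp_rw [h, Finset.sum_sub_distrib]
  rw [sub_eq_zero, Finset.sum_comm]
  refine Finset.sum_congr rfl fun u _ => Finset.sum_congr rfl fun w _ => ?_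
  rw [G.adj_comm]

lemma sum_lap_subset (G : SimpleGraph V) (x : V → ℤ) (A : Finset V) :
    ∑ w ∈ A, G.lap x w
      = ∑ w ∈ A, ∑ u ∈ Finset.univ \ A, (if G.Adj w u then x w - x u else 0) := by
  have h : ∀ w ∈ A, G.lap x w
      = (∑ u ∈ Finset.univ \ A, (if G.Adj w u then x w - x u else 0))
        + ∑ u ∈ A, (if G.Adj w u then x w - x u else 0) := by
    intro w _
    unfold SimpleGraph.lap
    rw [Finset.sum_sdiff (Finset.subset_univ A)]
  rw [Finset.sum_congr rfl h, Finset.sum_add_distrib, sum_pairs_zero, add_zero]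

lemma valid_bound (G : SimpleGraph V) (hG : G.Connected) (q : V) (D : V → ℤ) (x : V → ℤ)
    (hval : ∀ v, v ≠ q → G.lap x v ≤ D v) (hq : x q = 0) :
    ∀ v, x v ≤ (Fintype.card V : ℤ) * ∑ w, max (D w) 0 := by
  classical
  set Dm : ℤ := ∑ w, max (D w) 0 with hDm
  have hDm0 : 0 ≤ Dm := Finset.sum_nonneg fun w _ => le_max_right _ _
  -- key step: one-step bound
  have key : ∀ v u0, v ≠ q → G.Adj v u0 → x v ≤ max (x u0) 0 + Dm := by
    intro v u0 hv hadj
    by_contra hcon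
    push_neg at hcon
    set t : ℤ := max (x u0) 0 + 1 with ht
    set A : Finset V := Finset.univ.filter (fun w => t ≤ x w) with hA
    have hvA : v ∈ A := by
      simp only [hA, Finset.mem_filter, Finset.mem_univ, true_and]
      omega
    have hqA : q ∉ A := by
      simp only [hA, Finset.mem_filter, Finset.mem_univ, true_and, hq]
      have : (0:ℤ) ≤ max (x u0) 0 := le_max_right _ _
      omega
    have hu0A : u0 ∉ A := by
      simp only [hA, Finset.mem_filter, Finset.mem_univ, true_and]
      have : x u0 ≤ max (x u0) 0 := le_max_left _ _
      omega
    -- lower bound on boundary sum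
    have hterm_nonneg : ∀ w ∈ A, ∀ u ∈ Finset.univ \ A,
        0 ≤ (if G.Adj w u then x w - x u else 0) := by
      intro w hw u hu
      rw [Finset.mem_sdiff] at hu
      simp only [hA, Finset.mem_filter, Finset.mem_univ, true_and] at hw hu
      split_ifs
      · omega
      · omega
    have hu0mem : u0 ∈ Finset.univ \ A := by
      rw [Finset.mem_sdiff]; exact ⟨Finset.mem_univ _, hu0A⟩
    have hlow : x v - x u0 ≤ ∑ w ∈ A, ∑ u ∈ Finset.univ \ A,
        (if G.Adj w u then x w - x u else 0) := by
      have h1 : x v - x u0 ≤ ∑ u ∈ Finset.univ \ A, (if G.Adj v u then x v - x u else 0) := by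
        have := Finset.single_le_sum (f := fun u => if G.Adj v u then x v - x u else 0)
          (fun u hu => hterm_nonneg v hvA u hu) hu0mem
        simpa [hadj] using this
      calc x v - x u0 ≤ ∑ u ∈ Finset.univ \ A, (if G.Adj v u then x v - x u else 0) := h1
        _ ≤ ∑ w ∈ A, ∑ u ∈ Finset.univ \ A, (if G.Adj w u then x w - x u else 0) :=
          Finset.single_le_sum (f := fun w => ∑ u ∈ Finset.univ \ A,
            (if G.Adj w u then x w - x u else 0))
            (fun w hw => Finset.sum_nonneg (fun u hu => hterm_nonneg w hw u hu)) hvA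
    -- upper bound on the same sum
    have hup : ∑ w ∈ A, G.lap x w ≤ Dm := by
      calc ∑ w ∈ A, G.lap x w ≤ ∑ w ∈ A, D w := by
            refine Finset.sum_le_sum fun w hw => hval w ?_
            intro hwq; exact hqA (hwq ▸ hw)
        _ ≤ ∑ w ∈ A, max (D w) 0 := Finset.sum_le_sum fun w _ => le_max_left _ _
        _ ≤ Dm := Finset.sum_le_sum_of_subset_of_nonneg (Finset.subset_univ A)
            (fun w _ _ => le_max_right _ _)
    rw [sum_lap_subset] at hup
    have hxu0 : x u0 ≤ max (x u0) 0 := le_max_left _ _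
    omega
  -- induction on distance
  have main : ∀ k : ℕ, ∀ v : V, G.dist q v ≤ k → x v ≤ (k : ℤ) * Dm := by
    intro k
    induction k with
    | zero =>
      intro v hv
      have : v = q := by
        have h0 : G.dist q v = 0 := Nat.le_zero.mp hv
        have := ((G.dist_eq_zero_iff_eq_or_not_reachable).mp h0)
        rcases this with h | h
        · exact h.symm
        · exact absurd (hG.preconnected q v) h
      simp [this, hq]
    | succ k ih =>
      intro v hv
      by_cases hvq : v = q
      · rw [hvq, hq]; positivity
      · by_cases hd : G.dist q v ≤ k
        · calc x v ≤ (k:ℤ) * Dm := ih v hd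
            _ ≤ ((k:ℕ)+1 : ℤ) * Dm := by nlinarith
        · obtain ⟨u0, hadj, hdu⟩ := exists_adj_dist G hG hvq
          have hu0d : G.dist q u0 ≤ k := by omega
          have hih := ih u0 hu0d
          have hk := key v u0 hvq hadj
          have hmax : max (x u0) 0 ≤ (k:ℤ) * Dm := by
            have : (0:ℤ) ≤ (k:ℤ) * Dm := by positivity
            omega
          have hring : ((k:ℤ)+1) * Dm = (k:ℤ) * Dm + Dm := by ring
          push_cast
          omega
  intro v
  have h1 : G.dist q v ≤ Fintype.card V := le_of_lt (dist_lt_card G hG q v)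
  have := main (Fintype.card V) v h1
  omega

end GonAux
namespace GonAux

variable {V : Type*} [Fintype V]

lemma peel (G : SimpleGraph V) (d : V → ℤ) (q : V)
    (hred : ∀ B : Finset V, B.Nonempty → q ∉ B →
      ∃ v ∈ B, d v < ((Finset.univ.filter fun u => G.Adj v u ∧ u ∉ B).card : ℤ)) :
    ∀ A : Finset V, q ∉ A →
      ∑ v ∈ A, (d v + 1) ≤ ((G.edgeFinset.filter fun e => ∃ v ∈ A, v ∈ e).card : ℤ) := by
  classical
  intro A
  induction A using Finset.strongInduction with
  | _ A ih =>
    intro hqA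
    rcases A.eq_empty_or_nonempty with rfl | hne
    · simp
    · obtain ⟨v, hvA, hv⟩ := hred A hne hqA
      have hqA2 : q ∉ (A.erase v) := fun h => hqA (Finset.mem_of_mem_erase h)
      have ihe := ih (A.erase v) (Finset.erase_ssubset hvA) hqA2
      rw [← Finset.add_sum_erase _ _ hvA]
      -- counting step
      set N := Finset.univ.filter fun u => G.Adj v u ∧ u ∉ A with hN
      set I := N.image (fun u => s(v, u)) with hI
      have hIcard : I.card = N.card := by
        rw [hI]
        apply Finset.card_image_of_injOn
        intro u _ u' _ h
        exact Sym2.congr_right.mp h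
      have hIsub : I ⊆ G.edgeFinset.filter fun e => ∃ w ∈ A, w ∈ e := by
        intro e he
        rw [hI] at he
        obtain ⟨u, hu, rfl⟩ := Finset.mem_image.mp he
        rw [Finset.mem_filter] at hu ⊢
        refine ⟨?_, v, hvA, Sym2.mem_mk_left _ _⟩
        rw [SimpleGraph.mem_edgeFinset, SimpleGraph.mem_edgeSet]
        exact hu.2.1
      have hA2sub : (G.edgeFinset.filter fun e => ∃ w ∈ (A.erase v), w ∈ e)
          ⊆ G.edgeFinset.filter fun e => ∃ w ∈ A, w ∈ e := by
        intro e he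
        rw [Finset.mem_filter] at he ⊢
        obtain ⟨h1, w, hw, hwe⟩ := he
        exact ⟨h1, w, Finset.mem_of_mem_erase hw, hwe⟩
      have hdisj : Disjoint I (G.edgeFinset.filter fun e => ∃ w ∈ (A.erase v), w ∈ e) := by
        rw [Finset.disjoint_left]
        intro e he he'
        rw [hI] at he
        obtain ⟨u, hu, rfl⟩ := Finset.mem_image.mp he
        rw [Finset.mem_filter] at he' hu
        obtain ⟨-, w, hw, hwe⟩ := he'
        rw [Sym2.mem_iff] at hwe
        rcases hwe with rfl | rfl
        · exact (Finset.notMem_erase _ _) hw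
        · exact hu.2.2 (Finset.mem_of_mem_erase hw)
      have hcount : N.card + (G.edgeFinset.filter fun e => ∃ w ∈ (A.erase v), w ∈ e).card
          ≤ (G.edgeFinset.filter fun e => ∃ w ∈ A, w ∈ e).card := by
        rw [← hIcard, ← Finset.card_union_of_disjoint hdisj]
        apply Finset.card_le_card
        exact Finset.union_subset hIsub hA2sub
      have hv' : d v + 1 ≤ (N.card : ℤ) := by omega
      have := ihe
      push_cast at hcount ⊢
      omega

lemma exists_effective (G : SimpleGraph V) (hG : G.Connected) (D : V → ℤ)
    (hdeg : (Nat.card G.edgeSet : ℤ) - Fintype.card V + 1 ≤ ∑ v, D v) :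
    ∃ x : V → ℤ, ∀ v, 0 ≤ D v - G.lap x v := by
  classical
  have hne : Nonempty V := hG.nonempty
  obtain ⟨q⟩ := id hne
  -- maximal valid x with x q = 0
  set P : ℤ → Prop := fun s => ∃ x : V → ℤ,
    (∀ v, v ≠ q → G.lap x v ≤ D v) ∧ x q = 0 ∧ ∑ v, x v = s with hP
  have hPinh : ∃ s, P s := by
    obtain ⟨x0, hx0⟩ := exists_valid G hG q D
    refine ⟨∑ v, (x0 v - x0 q), fun v => x0 v - x0 q, fun v hv => ?_, by simp, rfl⟩
    rw [lap_sub_const]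
    exact hx0 v hv
  have hPbdd : ∃ b : ℤ, ∀ s, P s → s ≤ b := by
    refine ⟨(Fintype.card V : ℤ) * ((Fintype.card V : ℤ) * ∑ w, max (D w) 0), ?_⟩
    rintro s ⟨x, hval, hq, rfl⟩
    calc ∑ v, x v ≤ Finset.univ.card • ((Fintype.card V : ℤ) * ∑ w, max (D w) 0) :=
          Finset.sum_le_card_nsmul _ _ _
            (fun v _ => valid_bound G hG q D x hval hq v)
      _ = (Fintype.card V : ℤ) * ((Fintype.card V : ℤ) * ∑ w, max (D w) 0) := by
          rw [Finset.card_univ, nsmul_eq_mul]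
  obtain ⟨s, ⟨x, hval, hxq, hxs⟩, hmax⟩ := Int.exists_greatest_of_bdd hPbdd hPinh
  set D' : V → ℤ := fun v => D v - G.lap x v with hD'
  -- reducedness
  have hred : ∀ B : Finset V, B.Nonempty → q ∉ B →
      ∃ v ∈ B, D' v < ((Finset.univ.filter fun u => G.Adj v u ∧ u ∉ B).card : ℤ) := by
    intro B hBne hqB
    by_contra hcon
    push_neg at hcon
    -- then x + ind B is valid, contradicting maximality
    have hvalid' : ∀ v, v ≠ q → G.lap (x + ind B) v ≤ D v := by
      intro v hv
      rw [lap_add]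
      by_cases hvB : v ∈ B
      · have h1 := hcon v hvB
        rw [lap_ind_mem G hvB]
        simp only [hD'] at h1
        omega
      · have h1 := lap_ind_not_mem G hvB
        have h2 := hval v hv
        omega
    have hsum' : ∑ v, (x + ind B) v = s + B.card := by
      simp only [Pi.add_apply]
      rw [Finset.sum_add_distrib, hxs]
      congr 1
      unfold ind
      rw [Finset.sum_ite_mem, Finset.univ_inter, Finset.sum_const, nsmul_eq_mul, mul_one]
    have hq' : (x + ind B) q = 0 := by
      simp only [Pi.add_apply, hxq, ind, if_neg hqB]
      ring
    have := hmax (s + B.card) ⟨x + ind B, hvalid', hq', hsum'⟩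
    have hB0 : 0 < B.card := Finset.card_pos.mpr hBne
    omega
  -- peel bound
  have hpeel : ∑ v ∈ Finset.univ.erase q, (D' v + 1) ≤ ((Nat.card G.edgeSet : ℤ)) := by
    refine (peel G D' q hred (Finset.univ.erase q) (Finset.notMem_erase _ _)).trans ?_
    have h2 : G.edgeFinset.card = Nat.card G.edgeSet := by
      rw [SimpleGraph.edgeFinset_card, Nat.card_eq_fintype_card]
    exact_mod_cast (Finset.card_filter_le _ _).trans_eq h2
  have hsum_erase : ∑ v ∈ Finset.univ.erase q, (D' v + 1)
      = (∑ v ∈ Finset.univ.erase q, D' v) + ((Fintype.card V : ℤ) - 1) := by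
    rw [Finset.sum_add_distrib, Finset.sum_const, Finset.card_erase_of_mem (Finset.mem_univ q),
      Finset.card_univ, nsmul_eq_mul, mul_one]
    have : 1 ≤ Fintype.card V := Fintype.card_pos
    push_cast [Nat.cast_sub this]
    ring
  have hsumD' : ∑ v, D' v = ∑ v, D v := by
    simp only [hD']
    rw [Finset.sum_sub_distrib, sum_lap, sub_zero]
  have hDq : D' q = ∑ v, D' v - ∑ v ∈ Finset.univ.erase q, D' v := by
    rw [← Finset.add_sum_erase _ _ (Finset.mem_univ q)]
    ring
  refine ⟨x, fun v => ?_⟩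
  by_cases hv : v = q
  · have hq0 : 0 ≤ D' q := by
      rw [hDq, hsumD']
      omega
    rw [hv]
    simpa [hD'] using hq0
  · have := hval v hv
    omega

end GonAux
namespace GonAux

variable {V : Type*} {W : Type*} [Fintype V] [Fintype W]

lemma lap_fst (G : SimpleGraph V) (H : SimpleGraph W) (y : V → ℤ) (v : V) (w : W) :
    (G □ H).lap (fun p => y p.1) (v, w) = G.lap y v := by
  unfold SimpleGraph.lap
  rw [Fintype.sum_prod_type]
  have hterm : ∀ (u : V) (z : W),
      (if (G □ H).Adj (v, w) (u, z) then y v - y u else 0)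
      = (if G.Adj v u ∧ w = z then y v - y u else 0) := by
    intro u z
    by_cases h1 : G.Adj v u ∧ w = z
    · rw [if_pos h1, if_pos (by simp [SimpleGraph.boxProd_adj, h1])]
    · by_cases h2 : H.Adj w z ∧ v = u
      · rw [if_neg h1, if_pos (by simp [SimpleGraph.boxProd_adj]; right; exact ⟨h2.1, h2.2⟩)]
        rw [h2.2, sub_self]
      · have h3 : ¬ ((G □ H).Adj (v, w) (u, z)) := by
          simp only [SimpleGraph.boxProd_adj]
          push_neg
          exact ⟨fun h hz => h1 ⟨h, hz⟩, fun h hu => h2 ⟨h, hu⟩⟩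
        rw [if_neg h1, if_neg h3]
  have hinner : ∀ u : V, (∑ z : W, if G.Adj v u ∧ w = z then y v - y u else 0)
      = (if G.Adj v u then y v - y u else 0) := by
    intro u
    by_cases h : G.Adj v u
    · simp only [h, true_and, if_pos]
      rw [Finset.sum_ite_eq Finset.univ w (fun _ => y v - y u)]
      simp
    · simp [h]
  simp only [hterm, hinner]

lemma pullback_mem (G : SimpleGraph V) (H : SimpleGraph W) (hG : G.Connected)
    (q : V) (c : ℕ)
    (hc : (Nat.card G.edgeSet : ℤ) - (Fintype.card V : ℤ) + 2 ≤ (c : ℤ)) :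
    ∃ D : V × W → ℤ, Effective D ∧ (G □ H).PosRank D ∧
      (∑ p, D p) = ((Fintype.card W * c : ℕ) : ℤ) := by
  classical
  refine ⟨fun p => if p.1 = q then (c : ℤ) else 0, fun p => by positivity, ?_, ?_⟩
  · rintro ⟨v0, w0⟩
    -- divisor on G : c at q minus 1 at v0
    have hdeg : (Nat.card G.edgeSet : ℤ) - Fintype.card V + 1
        ≤ ∑ v, ((if v = q then (c:ℤ) else 0) - (if v = v0 then 1 else 0)) := by
      rw [Finset.sum_sub_distrib]
      rw [Finset.sum_ite_eq' Finset.univ q (fun _ => (c:ℤ)),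
        Finset.sum_ite_eq' Finset.univ v0 (fun _ => (1:ℤ))]
      simp only [Finset.mem_univ, if_pos]
      omega
    obtain ⟨y, hy⟩ := exists_effective G hG
      (fun v => (if v = q then (c:ℤ) else 0) - (if v = v0 then 1 else 0)) hdeg
    refine ⟨fun p => (if p.1 = q then (c:ℤ) else 0)
        - (if p = (v0, w0) then 1 else 0) - (G □ H).lap (fun p => y p.1) p,
      ?_, fun p => y p.1, ?_⟩
    · rintro ⟨v, w⟩
      have h1 := hy v
      have h2 : (G □ H).lap (fun p => y p.1) (v, w) = G.lap y v := lap_fst G H y v w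
      simp only [h2]
      by_cases hv : v = v0
      · by_cases hw : w = w0
        · subst hv; subst hw; simp only [Prod.mk.injEq, and_self, if_pos rfl] at *; omega
        · rw [if_neg (show ¬ ((v, w) = (v0, w0)) by simp [Prod.ext_iff, hw])]
          split_ifs at h1 ⊢ <;> omega
      · rw [if_neg (show ¬ ((v, w) = (v0, w0)) by simp [Prod.ext_iff, hv])]
        split_ifs at h1 ⊢ <;> omega
    · funext p
      simp only [Pi.sub_apply]
      ring
  · rw [Fintype.sum_prod_type]
    have : ∀ v : V, (∑ _w : W, if v = q then (c:ℤ) else 0)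
        = (if v = q then ((Fintype.card W : ℤ) * c) else 0) := by
      intro v
      rw [Finset.sum_const, Finset.card_univ, nsmul_eq_mul]
      split_ifs <;> ring
    simp_rw [this]
    rw [Finset.sum_ite_eq' Finset.univ q (fun _ => ((Fintype.card W : ℤ) * c))]
    simp only [Finset.mem_univ, if_pos]
    push_cast
    ring

end GonAux
namespace GonAux

lemma sym2_right_eq {α β : Type*} {w w' : β} {es es' : Sym2 α}
    (h : Sym2.map (fun v => (v, w)) es = Sym2.map (fun v => (v, w')) es') :
    w = w' ∧ es = es' := by
  induction es using Sym2.ind with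
  | _ a b =>
    induction es' using Sym2.ind with
    | _ a' b' =>
      simp only [Sym2.map_pair_eq, Sym2.eq_iff, Prod.mk.injEq] at h
      rcases h with ⟨⟨h1, h2⟩, ⟨h3, h4⟩⟩ | ⟨⟨h1, h2⟩, ⟨h3, h4⟩⟩ <;>
        · refine ⟨h2, ?_⟩
          rw [Sym2.eq_iff]
          tauto

lemma sym2_left_eq {α β : Type*} {v v' : α} {es es' : Sym2 β}
    (h : Sym2.map (fun z => (v, z)) es = Sym2.map (fun z => (v', z)) es') :
    v = v' ∧ es = es' := by
  induction es using Sym2.ind with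
  | _ a b =>
    induction es' using Sym2.ind with
    | _ a' b' =>
      simp only [Sym2.map_pair_eq, Sym2.eq_iff, Prod.mk.injEq] at h
      rcases h with ⟨⟨h1, h2⟩, ⟨h3, h4⟩⟩ | ⟨⟨h1, h2⟩, ⟨h3, h4⟩⟩ <;>
        · refine ⟨h1, ?_⟩
          rw [Sym2.eq_iff]
          tauto

lemma sym2_mix_ne {α β : Type*} {w : β} {v : α} {es : Sym2 α} {es' : Sym2 β}
    (hd : ¬ es.IsDiag) :
    Sym2.map (fun u => (u, w)) es ≠ Sym2.map (fun z => (v, z)) es' := by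
  induction es using Sym2.ind with
  | _ a b =>
    induction es' using Sym2.ind with
    | _ a' b' =>
      intro h
      simp only [Sym2.map_pair_eq, Sym2.eq_iff, Prod.mk.injEq] at h
      rw [Sym2.mk_isDiag_iff] at hd
      rcases h with ⟨⟨h1, h2⟩, ⟨h3, h4⟩⟩ | ⟨⟨h1, h2⟩, ⟨h3, h4⟩⟩ <;>
        exact hd (h1.trans h3.symm)

variable {V : Type*} {W : Type*} [Fintype V] [Fintype W]

lemma connected_card_le (G : SimpleGraph V) (hG : G.Connected) :
    Fintype.card V ≤ Nat.card G.edgeSet + 1 := by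
  classical
  have hne : Nonempty V := hG.nonempty
  obtain ⟨q⟩ := id hne
  have hstep : ∀ v : {v : V // v ≠ q}, ∃ u, G.Adj v.val u ∧ G.dist q u + 1 = G.dist q v.val :=
    fun v => exists_adj_dist G hG v.property
  choose u hadj hdist using hstep
  set f : {v : V // v ≠ q} → G.edgeSet :=
    fun v => ⟨s(v.val, u v), G.mem_edgeSet.mpr (hadj v)⟩ with hf
  have hinj : Function.Injective f := by
    intro a b hab
    simp only [hf, Subtype.mk.injEq, Sym2.eq_iff] at hab
    rcases hab with ⟨h1, -⟩ | ⟨h1, h2⟩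
    · exact Subtype.ext h1
    · exfalso
      have d1 := hdist a
      have d2 := hdist b
      rw [h1] at d1
      rw [← h2] at d2
      omega
  have hcard := Fintype.card_le_of_injective f hinj
  have h1 : Fintype.card {v : V // v ≠ q} = Fintype.card V - 1 := by
    simp [Fintype.card_subtype_compl]
  have h2 : Fintype.card G.edgeSet = Nat.card G.edgeSet := (Nat.card_eq_fintype_card).symm
  have h3 : 1 ≤ Fintype.card V := Fintype.card_pos
  omega

lemma boxProd_edges_lower (G : SimpleGraph V) (H : SimpleGraph W) :
    Fintype.card W * Nat.card G.edgeSet + Fintype.card V * Nat.card H.edgeSet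
      ≤ Nat.card (G □ H).edgeSet := by
  classical
  set f : (W × G.edgeSet) ⊕ (V × H.edgeSet) → (G □ H).edgeSet :=
    fun x => match x with
    | Sum.inl (w, e) => ⟨Sym2.map (fun v => (v, w)) e.val, by
        obtain ⟨es, he⟩ := e
        induction es using Sym2.ind with
        | _ a b =>
          rw [Sym2.map_pair_eq, SimpleGraph.mem_edgeSet]
          exact (SimpleGraph.boxProd_adj_left).mpr (G.mem_edgeSet.mp he)⟩
    | Sum.inr (v, e) => ⟨Sym2.map (fun w => (v, w)) e.val, by
        obtain ⟨es, he⟩ := e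
        induction es using Sym2.ind with
        | _ a b =>
          rw [Sym2.map_pair_eq, SimpleGraph.mem_edgeSet]
          exact (SimpleGraph.boxProd_adj_right).mpr (H.mem_edgeSet.mp he)⟩
    with hfdef
  have hinj : Function.Injective f := by
    rintro (⟨w, es, he⟩ | ⟨v, es, he⟩) (⟨w', es', he'⟩ | ⟨v', es', he'⟩) hab <;>
      simp only [hfdef, Subtype.mk.injEq] at hab
    · obtain ⟨h1, h2⟩ := sym2_right_eq hab
      subst h1; subst h2; rfl
    · exact absurd hab (sym2_mix_ne (G.not_isDiag_of_mem_edgeSet he))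
    · exact absurd hab.symm (sym2_mix_ne (G.not_isDiag_of_mem_edgeSet he'))
    · obtain ⟨h1, h2⟩ := sym2_left_eq hab
      subst h1; subst h2; rfl
  have hcard := Nat.card_le_card_of_injective f hinj
  rw [Nat.card_sum, Nat.card_prod, Nat.card_prod, Nat.card_eq_fintype_card (α := W),
    Nat.card_eq_fintype_card (α := V)] at hcard
  exact hcard

end GonAux
namespace GonAux

variable {V : Type*} {W : Type*} [Fintype V] [Fintype W]

lemma lap_snd (G : SimpleGraph V) (H : SimpleGraph W) (y : W → ℤ) (v : V) (w : W) :
    (G □ H).lap (fun p => y p.2) (v, w) = H.lap y w := by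
  unfold SimpleGraph.lap
  rw [Fintype.sum_prod_type_right]
  have hterm : ∀ (z : W) (u : V),
      (if (G □ H).Adj (v, w) (u, z) then y w - y z else 0)
      = (if H.Adj w z ∧ v = u then y w - y z else 0) := by
    intro z u
    by_cases h1 : H.Adj w z ∧ v = u
    · rw [if_pos h1, if_pos (by simp [SimpleGraph.boxProd_adj]; right; exact ⟨h1.1, h1.2⟩)]
    · by_cases h2 : G.Adj v u ∧ w = z
      · rw [if_neg h1, if_pos (by simp [SimpleGraph.boxProd_adj]; left; exact ⟨h2.1, h2.2⟩)]
        rw [h2.2, sub_self]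
      · have h3 : ¬ ((G □ H).Adj (v, w) (u, z)) := by
          simp only [SimpleGraph.boxProd_adj]
          push_neg
          exact ⟨fun h hz => h2 ⟨h, hz⟩, fun h hu => h1 ⟨h, hu⟩⟩
        rw [if_neg h1, if_neg h3]
  have hinner : ∀ z : W, (∑ u : V, if H.Adj w z ∧ v = u then y w - y z else 0)
      = (if H.Adj w z then y w - y z else 0) := by
    intro z
    by_cases h : H.Adj w z
    · simp only [h, true_and, if_pos]
      rw [Finset.sum_ite_eq Finset.univ v (fun _ => y w - y z)]
      simp
    · simp [h]
  simp only [hterm, hinner]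

lemma pullback_mem_right (G : SimpleGraph V) (H : SimpleGraph W) (hH : H.Connected)
    (q : W) (c : ℕ)
    (hc : (Nat.card H.edgeSet : ℤ) - (Fintype.card W : ℤ) + 2 ≤ (c : ℤ)) :
    ∃ D : V × W → ℤ, Effective D ∧ (G □ H).PosRank D ∧
      (∑ p, D p) = ((Fintype.card V * c : ℕ) : ℤ) := by
  classical
  refine ⟨fun p => if p.2 = q then (c : ℤ) else 0, fun p => by positivity, ?_, ?_⟩
  · rintro ⟨v0, w0⟩
    have hdeg : (Nat.card H.edgeSet : ℤ) - Fintype.card W + 1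
        ≤ ∑ w, ((if w = q then (c:ℤ) else 0) - (if w = w0 then 1 else 0)) := by
      rw [Finset.sum_sub_distrib]
      rw [Finset.sum_ite_eq' Finset.univ q (fun _ => (c:ℤ)),
        Finset.sum_ite_eq' Finset.univ w0 (fun _ => (1:ℤ))]
      simp only [Finset.mem_univ, if_pos]
      omega
    obtain ⟨y, hy⟩ := exists_effective H hH
      (fun w => (if w = q then (c:ℤ) else 0) - (if w = w0 then 1 else 0)) hdeg
    refine ⟨fun p => (if p.2 = q then (c:ℤ) else 0)
        - (if p = (v0, w0) then 1 else 0) - (G □ H).lap (fun p => y p.2) p,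
      ?_, fun p => y p.2, ?_⟩
    · rintro ⟨v, w⟩
      have h1 := hy w
      have h2 : (G □ H).lap (fun p => y p.2) (v, w) = H.lap y w := lap_snd G H y v w
      simp only [h2]
      by_cases hw : w = w0
      · by_cases hv : v = v0
        · subst hv; subst hw; simp only [Prod.mk.injEq, and_self, if_pos rfl] at *; omega
        · rw [if_neg (show ¬ ((v, w) = (v0, w0)) by simp [Prod.ext_iff, hv])]
          split_ifs at h1 ⊢ <;> omega
      · rw [if_neg (show ¬ ((v, w) = (v0, w0)) by simp [Prod.ext_iff, hw])]
        split_ifs at h1 ⊢ <;> omega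
    · funext p
      simp only [Pi.sub_apply]
      ring
  · rw [Fintype.sum_prod_type]
    have : ∀ v : V, (∑ w : W, if w = q then (c:ℤ) else 0) = (c:ℤ) := by
      intro v
      rw [Finset.sum_ite_eq' Finset.univ q (fun _ => (c:ℤ))]
      simp
    calc ∑ u : V, ∑ z : W, (if (u, z).2 = q then (c:ℤ) else 0)
        = ∑ _u : V, (c:ℤ) := Finset.sum_congr rfl (fun v _ => this v)
      _ = (Fintype.card V : ℤ) * c := by
          rw [Finset.sum_const, Finset.card_univ, nsmul_eq_mul]
      _ = ((Fintype.card V * c : ℕ) : ℤ) := by push_cast; ring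

end GonAux
theorem gonality_boxProd_lt_genus_bound {V W : Type*} [Fintype V] [Fintype W]
    (G : SimpleGraph V) (H : SimpleGraph W) (hG : G.Connected) (hH : H.Connected)
    (hV : 4 ≤ Fintype.card V) (hW : 4 ≤ Fintype.card W) :
    ((G □ H).gonality : ℤ) ≤ ((G □ H).genus + 3) / 2 - 2 ∧
      ((G □ H).gonality : ℤ) < ((G □ H).genus + 3) / 2 := by
  classical
  obtain ⟨q⟩ := id hG.nonempty
  obtain ⟨r⟩ := id hH.nonempty
  set n := Fintype.card V with hn
  set m := Fintype.card W with hm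
  set eG := Nat.card G.edgeSet with heGdef
  set eH := Nat.card H.edgeSet with heHdef
  have heG : n ≤ eG + 1 := GonAux.connected_card_le G hG
  have heH : m ≤ eH + 1 := GonAux.connected_card_le H hH
  set cG : ℕ := eG + 2 - n with hcGdef
  set cH : ℕ := eH + 2 - m with hcHdef
  have hcG : (cG : ℤ) = (eG : ℤ) - n + 2 := by
    rw [hcGdef]
    push_cast [Nat.cast_sub (by omega : n ≤ eG + 2)]
    ring
  have hcH : (cH : ℤ) = (eH : ℤ) - m + 2 := by
    rw [hcHdef]
    push_cast [Nat.cast_sub (by omega : m ≤ eH + 2)]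
    ring
  have hgon1 : (G □ H).gonality ≤ m * cG := by
    apply Nat.sInf_le
    obtain ⟨D, h1, h2, h3⟩ := GonAux.pullback_mem G H hG q cG hcG.ge
    exact ⟨D, h1, h2, h3⟩
  have hgon2 : (G □ H).gonality ≤ n * cH := by
    apply Nat.sInf_le
    obtain ⟨D, h1, h2, h3⟩ := GonAux.pullback_mem_right G H hH r cH hcH.ge
    exact ⟨D, h1, h2, h3⟩
  have hE : m * eG + n * eH ≤ Nat.card (G □ H).edgeSet := GonAux.boxProd_edges_lower G H
  have hgenus : (Nat.card (G □ H).edgeSet : ℤ) - (n : ℤ) * m + 1 = (G □ H).genus := by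
    unfold SimpleGraph.genus
    rw [Fintype.card_prod]
    push_cast
    ring
  have hn4 : (4 : ℤ) ≤ (n : ℤ) := by exact_mod_cast hV
  have hm4 : (4 : ℤ) ≤ (m : ℤ) := by exact_mod_cast hW
  have hnm : 2 * (n : ℤ) + 2 * (m : ℤ) ≤ (n : ℤ) * m := by
    have h1 : (2 : ℤ) * 2 ≤ ((n : ℤ) - 2) * ((m : ℤ) - 2) :=
      mul_le_mul (by omega) (by omega) (by norm_num) (by omega)
    nlinarith [h1]
  have hEz : (m : ℤ) * eG + (n : ℤ) * eH ≤ (Nat.card (G □ H).edgeSet : ℤ) := by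
    exact_mod_cast hE
  have e1 : (m : ℤ) * eG = (m : ℤ) * cG + (m : ℤ) * n - 2 * m := by
    linear_combination (-(m : ℤ)) * hcG
  have e2 : (n : ℤ) * eH = (n : ℤ) * cH + (n : ℤ) * m - 2 * n := by
    linear_combination (-(n : ℤ)) * hcH
  have key : ∃ N : ℕ, (G □ H).gonality ≤ N ∧ 2 * (N : ℤ) + 4 ≤ (G □ H).genus + 3 := by
    rcases le_total ((m : ℤ) * cG) ((n : ℤ) * cH) with hcase | hcase
    · refine ⟨m * cG, hgon1, ?_⟩
      rw [← hgenus]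
      push_cast
      have hmn : (m : ℤ) * n = (n : ℤ) * m := by ring
      linarith [hEz, e1, e2, hcase, hnm]
    · refine ⟨n * cH, hgon2, ?_⟩
      rw [← hgenus]
      push_cast
      have hmn : (m : ℤ) * n = (n : ℤ) * m := by ring
      linarith [hEz, e1, e2, hcase, hnm]
  obtain ⟨N, hN1, hN2⟩ := key
  have hdiv : (N : ℤ) + 2 ≤ ((G □ H).genus + 3) / 2 := by
    rw [Int.le_ediv_iff_mul_le (by norm_num : (0 : ℤ) < 2)]
    linarith
  have hgonN : ((G □ H).gonality : ℤ) ≤ (N : ℤ) := by exact_mod_cast hN1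
  constructor
  · linarith
  · linarith
end
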